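/- arXiv:2403.15198 — 8 statements merged into one kernel-verified Lean document; each statement's English description precedes it below -/
import Mathlib

section
/- Let n ≥ 3 and μ ∈ ℝⁿ with μ ≠ 0. Then for β, γ ∈ ℝ^{n-1}, d^μ_β = d^μ_γ (as functions on S_n × S_n) if and only if β = γ. -/
open Finset

noncomputable section

/-- `i >_σ j`: candidate `i` is ranked above candidate `j` by `σ`
(where `σ i` is the candidate in position `i`). -/
def prefOver {n : ℕ} (σ : Equiv.Perm (Fin n)) (i j : Fin n) : Prop :=
  σ.symm i < σ.symm j

/-- `M(S,σ)`: the set of `>_σ`-maximal elements of `S` (a singleton when `S ≠ ∅`). -/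
def bestSet {n : ℕ} (σ : Equiv.Perm (Fin n)) (S : Finset (Fin n)) : Finset (Fin n) :=
  S.filter fun x => ∀ y ∈ S, σ.symm x ≤ σ.symm y

/-- `△_S(σ,π) = M(S,σ) △ M(S,π)`. -/
def topDiff {n : ℕ} (σ π : Equiv.Perm (Fin n)) (S : Finset (Fin n)) : Finset (Fin n) :=
  symmDiff (bestSet σ S) (bestSet π S)

/-- The `(β,μ)`-top-difference distance; `β i` is the weight of menus of size `i+2`. -/
def dTD (n : ℕ) (β : Fin (n - 1) → ℝ) (μ : Fin n → ℝ)
    (σ π : Equiv.Perm (Fin n)) : ℝ :=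
  ∑ S ∈ Finset.univ.filter (fun S : Finset (Fin n) => 2 ≤ S.card),
    (if h : S.card - 2 < n - 1 then β ⟨S.card - 2, h⟩ else 0) *
      ∑ x ∈ topDiff σ π S, μ x

def IsSemimetric {α : Type*} (d : α → α → ℝ) : Prop :=
  (∀ x y, 0 ≤ d x y) ∧ (∀ x y, d x y = d y x) ∧ (∀ x, d x x = 0) ∧
    (∀ x y z, d x z ≤ d x y + d y z)

def IsMetricFn {α : Type*} (d : α → α → ℝ) : Prop :=
  IsSemimetric d ∧ ∀ x y, d x y = 0 → x = y

/-!
Compare a ranking `σ` in which `a` is ranked immediately above `b` with the ranking obtained by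
swapping `a` and `b`. The top of a menu `S` changes exactly when `S` contains `a` and `b` and
otherwise only candidates ranked below them, and then `△_S = {a, b}`. Hence the distance between
the two rankings is `(μ a + μ b)` times the sum of `β_{|S|}` over the interval of menus
`{a, b} ⊆ S ⊆ U`, where `U` is the set of candidates ranked at or below `a`. As `n ≥ 3` and
`μ ≠ 0`, some pair has `μ a + μ b ≠ 0`; letting `|U|` run through `2, …, n` gives a triangular
system whose diagonal entries are `β_{|U|}`, so `β` is determined by the distance.
-/
open Equiv

theorem exists_ne_add_ne_zero {α : Type*} [Fintype α] [DecidableEq α] (hα : 3 ≤ Fintype.card α)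
    {μ : α → ℝ} (hμ : μ ≠ 0) : ∃ a b, a ≠ b ∧ μ a + μ b ≠ 0 := by
  obtain ⟨x, hx⟩ := Function.ne_iff.mp hμ
  by_contra! h
  have hcard : 1 < #(univ.erase x) := by
    rw [card_erase_of_mem (mem_univ x), card_univ]; omega
  obtain ⟨y, hy, z, hz, hyz⟩ := one_lt_card.mp hcard
  have hxy := h x y (ne_of_mem_erase hy).symm
  have hxz := h x z (ne_of_mem_erase hz).symm
  have hyz := h y z hyz
  exact hx (by simp only [Pi.zero_apply]; linarith)

theorem Equiv.Perm.exists_apply_eq_and_apply_eq {α : Type*} [DecidableEq α] {i j a b : α}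
    (hij : i ≠ j) (hab : a ≠ b) : ∃ σ : Perm α, σ i = a ∧ σ j = b := by
  have hi : i ≠ swap i a b := fun h =>
    hab ((swap_apply_eq_iff.mp h.symm).trans (swap_apply_left i a)).symm
  refine ⟨swap i a * swap j (swap i a b), ?_, ?_⟩
  · simp [swap_apply_of_ne_of_ne hij hi]
  · simp

theorem swap_le_swap_of_covBy {α : Type*} [LinearOrder α] {i j u v : α} (hij : i ⋖ j)
    (huv : ¬(u = i ∧ v = j)) (h : u ≤ v) : swap i j u ≤ swap i j v := by
  have := hij.lt
  rw [swap_apply_def, swap_apply_def]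
  split_ifs <;> subst_vars
  all_goals first
    | order
    | (refine hij.ge_of_gt ?_; order)
    | (refine hij.le_of_lt ?_; order)
    | simp at huv

theorem eq_of_sum_Icc_card_eq {α M : Type*} [DecidableEq α] [AddCancelCommMonoid M]
    {f g : ℕ → M} {s t : Finset α} (hst : s ⊆ t) (hfg : ∀ j, #s ≤ j → j < #t → f j = g j)
    (h : ∑ S ∈ Icc s t, f #S = ∑ S ∈ Icc s t, g #S) : f #t = g #t := by
  have ht : t ∈ Icc s t := mem_Icc.mpr ⟨hst, le_rfl⟩
  have hrest : ∑ S ∈ (Icc s t).erase t, f #S = ∑ S ∈ (Icc s t).erase t, g #S := by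
    refine sum_congr rfl fun S hS => hfg _ ?_ ?_
    · exact card_le_card (mem_Icc.mp (mem_of_mem_erase hS)).1
    · exact card_lt_card
        ((mem_Icc.mp (mem_of_mem_erase hS)).2.ssubset_of_ne (ne_of_mem_erase hS))
  rw [← add_sum_erase _ _ ht, ← add_sum_erase _ _ ht, hrest] at h
  exact add_right_cancel h

section Ranking

variable {n : ℕ} {σ : Perm (Fin n)} {S : Finset (Fin n)} {a b x : Fin n}

@[simp]
theorem mem_bestSet : x ∈ bestSet σ S ↔ x ∈ S ∧ ∀ y ∈ S, σ.symm x ≤ σ.symm y := mem_filter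

theorem bestSet_eq_singleton_of_mem (hx : x ∈ bestSet σ S) : bestSet σ S = {x} := by
  refine eq_singleton_iff_unique_mem.mpr ⟨hx, fun y hy => σ.symm.injective ?_⟩
  rw [mem_bestSet] at hx hy
  exact le_antisymm (hy.2 x hx.1) (hx.2 y hy.1)

theorem bestSet_nonempty (hS : S.Nonempty) : (bestSet σ S).Nonempty := by
  obtain ⟨x, hx, hmin⟩ := S.exists_min_image σ.symm hS
  exact ⟨x, mem_bestSet.mpr ⟨hx, hmin⟩⟩

def atOrBelow (σ : Perm (Fin n)) (a : Fin n) : Finset (Fin n) :=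
  univ.filter fun y => σ.symm a ≤ σ.symm y

theorem card_atOrBelow : #(atOrBelow σ a) = n - σ.symm a := by
  have : atOrBelow σ a = (Ici (σ.symm a)).map σ.toEmbedding := by
    ext y
    simp [atOrBelow, mem_map_equiv]
  rw [this, card_map, Fin.card_Ici]

theorem pair_subset_atOrBelow (hab : σ.symm a ≤ σ.symm b) : {a, b} ⊆ atOrBelow σ a := by
  simp [insert_subset_iff, atOrBelow, hab]

theorem exists_perm_covBy_card_atOrBelow {m : ℕ} (hab : a ≠ b) (hm2 : 2 ≤ m) (hmn : m ≤ n) :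
    ∃ σ : Perm (Fin n), σ.symm a ⋖ σ.symm b ∧ #(atOrBelow σ a) = m := by
  obtain ⟨σ, hσa, hσb⟩ := Perm.exists_apply_eq_and_apply_eq
    (i := (⟨n - m, by omega⟩ : Fin n)) (j := ⟨n - m + 1, by omega⟩) (by simp) hab
  refine ⟨σ, ?_, ?_⟩
  · simp [← hσa, ← hσb, Fin.covBy_iff, Order.covBy_iff_add_one_eq]
  · rw [card_atOrBelow, ← hσa, σ.symm_apply_apply, Fin.val_mk]
    omega

theorem mem_bestSet_and_mem_iff_mem_Icc :
    a ∈ bestSet σ S ∧ b ∈ S ↔ S ∈ Icc {a, b} (atOrBelow σ a) := by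
  rw [mem_Icc, insert_subset_iff, singleton_subset_iff, mem_bestSet]
  simp only [subset_iff, atOrBelow, mem_filter, mem_univ, true_and]
  tauto

theorem topDiff_trans_swap_of_covBy (hab : σ.symm a ⋖ σ.symm b) (S : Finset (Fin n)) :
    topDiff σ (σ.trans (swap a b)) S = if a ∈ bestSet σ S ∧ b ∈ S then {a, b} else ∅ := by
  split_ifs with h
  · obtain ⟨ha, hb⟩ := h
    have hπ : b ∈ bestSet (σ.trans (swap a b)) S := by
      refine mem_bestSet.mpr ⟨hb, fun y hy => ?_⟩
      simp only [symm_trans_apply, symm_swap, swap_apply_right]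
      refine (mem_bestSet.mp ha).2 _ ?_
      rw [swap_apply_def]
      split_ifs <;> simp_all
    have hne : a ≠ b := fun h => hab.lt.ne (congrArg σ.symm h)
    rw [topDiff, bestSet_eq_singleton_of_mem ha, bestSet_eq_singleton_of_mem hπ,
      (disjoint_singleton.mpr hne).symmDiff_eq_sup, sup_eq_union, insert_eq]
  · rcases S.eq_empty_or_nonempty with rfl | hS
    · rfl
    obtain ⟨x, hx⟩ := bestSet_nonempty (σ := σ) hS
    have hπ : x ∈ bestSet (σ.trans (swap a b)) S := by
      obtain ⟨hxS, hmin⟩ := mem_bestSet.mp hx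
      refine mem_bestSet.mpr ⟨hxS, fun y hy => ?_⟩
      simp only [symm_trans_apply, symm_swap, ← σ.symm.injective.swap_apply]
      refine swap_le_swap_of_covBy hab ?_ (hmin y hy)
      simp only [σ.symm.injective.eq_iff]
      rintro ⟨rfl, rfl⟩
      exact h ⟨hx, hy⟩
    rw [topDiff, bestSet_eq_singleton_of_mem hx, bestSet_eq_singleton_of_mem hπ, symmDiff_self]
    rfl

/-- `β_m` in the indexing of the paper. -/
def menuWeight (β : Fin (n - 1) → ℝ) (m : ℕ) : ℝ :=
  if h : m - 2 < n - 1 then β ⟨m - 2, h⟩ else 0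

theorem dTD_trans_swap_of_covBy (β : Fin (n - 1) → ℝ) (μ : Fin n → ℝ)
    (hab : σ.symm a ⋖ σ.symm b) :
    dTD n β μ σ (σ.trans (swap a b)) =
      (μ a + μ b) * ∑ S ∈ Icc {a, b} (atOrBelow σ a), menuWeight β #S := by
  have hne : a ≠ b := fun h => hab.lt.ne (congrArg σ.symm h)
  have hIcc : Icc {a, b} (atOrBelow σ a) ⊆ univ.filter fun S => 2 ≤ #S := fun S hS =>
    mem_filter.mpr ⟨mem_univ S, card_pair hne ▸ card_le_card (mem_Icc.mp hS).1⟩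
  calc dTD n β μ σ (σ.trans (swap a b))
      = ∑ S ∈ univ.filter (fun S => 2 ≤ #S),
          menuWeight β #S * ∑ x ∈ topDiff σ (σ.trans (swap a b)) S, μ x := rfl
    _ = ∑ S ∈ univ.filter (fun S => 2 ≤ #S),
          if S ∈ Icc {a, b} (atOrBelow σ a) then menuWeight β #S * (μ a + μ b) else 0 := by
        refine sum_congr rfl fun S _ => ?_
        rw [topDiff_trans_swap_of_covBy hab]
        by_cases hS : a ∈ bestSet σ S ∧ b ∈ S
        · rw [if_pos hS, if_pos (mem_bestSet_and_mem_iff_mem_Icc.mp hS), sum_pair hne]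
        · rw [if_neg hS, if_neg (mt mem_bestSet_and_mem_iff_mem_Icc.mpr hS), sum_empty, mul_zero]
    _ = (μ a + μ b) * ∑ S ∈ Icc {a, b} (atOrBelow σ a), menuWeight β #S := by
        rw [sum_ite_mem, inter_eq_right.mpr hIcc, mul_sum]
        simp only [mul_comm]

end Ranking

theorem stmt1 (n : ℕ) (hn : 3 ≤ n) (μ : Fin n → ℝ) (hμ : μ ≠ 0)
    (β γ : Fin (n - 1) → ℝ) :
    dTD n β μ = dTD n γ μ ↔ β = γ := by
  refine ⟨fun hd => ?_, fun h => h ▸ rfl⟩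
  obtain ⟨a, b, hab, hμab⟩ := exists_ne_add_ne_zero (by simpa using hn) hμ
  have hweight : ∀ m, 2 ≤ m → m ≤ n → menuWeight β m = menuWeight γ m := by
    intro m
    induction m using Nat.strong_induction_on with
    | _ m ih =>
    intro hm2 hmn
    obtain ⟨σ, hcov, hcard⟩ := exists_perm_covBy_card_atOrBelow hab hm2 hmn
    have hsum := congrFun₂ hd σ (σ.trans (swap a b))
    rw [dTD_trans_swap_of_covBy β μ hcov, dTD_trans_swap_of_covBy γ μ hcov,
      mul_right_inj' hμab] at hsum
    rw [← hcard]
    refine eq_of_sum_Icc_card_eq (pair_subset_atOrBelow hcov.lt.le) (fun j hj hjm => ?_) hsum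
    rw [card_pair hab] at hj
    exact ih j (hcard ▸ hjm) hj (by omega)
  funext i
  simpa [menuWeight] using hweight (i + 2) (by omega) (by omega)
end
end

section
/- Let n ≥ 3 and let β ∈ ℝ^{n-1} be such that d_β is a metric or d_{−β} is a metric (i.e., β ∈ B>_n ∪ (−B>_n)). Then for μ, ν ∈ ℝⁿ, d^μ_β = d^ν_β (as functions on S_n × S_n) if and only if μ = ν. -/
/-!
Let `a` and `b` be the first and second candidates of a ranking `σ`, and let `π` be `σ` with
`a` and `b` exchanged. The top of a menu `S` changes only when `S` contains both `a` and `b`, and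
then `△_S(σ,π) = {a, b}`; hence `d^μ_β(σ,π) = (μ a + μ b) · C_{ab}`, where `C_{ab}` is the total
`β`-weight of the menus containing `a` and `b`. If `±d_β` is a metric then `C_{ab} ≠ 0`, because
`d_β(σ,π) = 2 C_{ab}` and `σ ≠ π`. So `d^μ_β` determines all pair sums `μ a + μ b`, and with at
least three candidates the pair sums determine `μ`.
-/

open Finset

noncomputable section

open Equiv

namespace TopDifference

variable {n : ℕ}

def sizeWeight (β : Fin (n - 1) → ℝ) (k : ℕ) : ℝ :=
  if h : k - 2 < n - 1 then β ⟨k - 2, h⟩ else 0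

def pairWeight (β : Fin (n - 1) → ℝ) (a b : Fin n) : ℝ :=
  ∑ S ∈ univ.filter (fun S : Finset (Fin n) => a ∈ S ∧ b ∈ S), sizeWeight β S.card

lemma sizeWeight_neg (β : Fin (n - 1) → ℝ) (k : ℕ) : sizeWeight (-β) k = -sizeWeight β k := by
  unfold sizeWeight
  split <;> simp

lemma pairWeight_neg (β : Fin (n - 1) → ℝ) (a b : Fin n) :
    pairWeight (-β) a b = -pairWeight β a b := by
  simp only [pairWeight, sizeWeight_neg, sum_neg_distrib]

lemma dTD_eq_sum_sizeWeight (β : Fin (n - 1) → ℝ) (μ : Fin n → ℝ) (σ π : Perm (Fin n)) :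
    dTD n β μ σ π = ∑ S ∈ univ.filter (fun S : Finset (Fin n) => 2 ≤ S.card),
      sizeWeight β S.card * ∑ x ∈ topDiff σ π S, μ x :=
  rfl

lemma bestSet_eq_singleton (σ : Perm (Fin n)) {S : Finset (Fin n)} {x : Fin n}
    (hx : x ∈ S) (hmin : ∀ y ∈ S, σ.symm x ≤ σ.symm y) : bestSet σ S = {x} := by
  ext z
  simp only [bestSet, mem_filter, mem_singleton]
  constructor
  · rintro ⟨hz, hz_min⟩
    exact σ.symm.injective (le_antisymm (hz_min x hx) (hmin z hz))
  · rintro rfl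
    exact ⟨hx, hmin⟩

section TopTwo

variable {σ : Perm (Fin n)} {a b : Fin n}

lemma topDiff_swap_mul_of_top_two (hab : a ≠ b) (ha : ∀ x, σ.symm a ≤ σ.symm x)
    (hb : ∀ x ≠ a, σ.symm b ≤ σ.symm x) (S : Finset (Fin n)) :
    topDiff σ (swap a b * σ) S = if a ∈ S ∧ b ∈ S then {a, b} else ∅ := by
  have hπ : ∀ x, (swap a b * σ).symm x = σ.symm (swap a b x) := fun _ => rfl
  have hπ_top : ∀ x, (swap a b * σ).symm b ≤ (swap a b * σ).symm x := by
    simpa only [hπ, swap_apply_right] using fun x => ha _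
  by_cases haS : a ∈ S <;> by_cases hbS : b ∈ S
  · rw [if_pos ⟨haS, hbS⟩, topDiff, bestSet_eq_singleton σ haS fun y _ => ha y,
      bestSet_eq_singleton _ hbS fun y _ => hπ_top y]
    ext x
    simp only [mem_symmDiff, mem_singleton, mem_insert]
    grind
  · have hπ_a : ∀ y ∈ S, (swap a b * σ).symm a ≤ (swap a b * σ).symm y := by
      intro y hy
      rw [hπ, hπ, swap_apply_left]
      refine hb _ fun h => hbS ?_
      rw [swap_apply_eq_iff, swap_apply_left] at h
      exact h ▸ hy
    rw [if_neg (by tauto), topDiff, bestSet_eq_singleton σ haS fun y _ => ha y,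
      bestSet_eq_singleton _ haS hπ_a, symmDiff_self, bot_eq_empty]
  · have hσ_b : ∀ y ∈ S, σ.symm b ≤ σ.symm y := fun y hy => hb y (ne_of_mem_of_not_mem hy haS)
    rw [if_neg (by tauto), topDiff, bestSet_eq_singleton σ hbS hσ_b,
      bestSet_eq_singleton _ hbS fun y _ => hπ_top y, symmDiff_self, bot_eq_empty]
  · have hπ_eq : ∀ y ∈ S, (swap a b * σ).symm y = σ.symm y := fun y hy => by
      rw [hπ, swap_apply_of_ne_of_ne (ne_of_mem_of_not_mem hy haS) (ne_of_mem_of_not_mem hy hbS)]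
    have h_best : bestSet σ S = bestSet (swap a b * σ) S :=
      filter_congr fun x hx => forall₂_congr fun y hy => by rw [hπ_eq x hx, hπ_eq y hy]
    rw [if_neg (by tauto), topDiff, h_best, symmDiff_self, bot_eq_empty]

lemma dTD_swap_mul_of_top_two (hab : a ≠ b) (ha : ∀ x, σ.symm a ≤ σ.symm x)
    (hb : ∀ x ≠ a, σ.symm b ≤ σ.symm x) (β : Fin (n - 1) → ℝ) (μ : Fin n → ℝ) :
    dTD n β μ σ (swap a b * σ) = (μ a + μ b) * pairWeight β a b := by
  have h_card : ∀ S : Finset (Fin n), a ∈ S ∧ b ∈ S → 2 ≤ S.card := fun S ⟨haS, hbS⟩ =>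
    card_pair hab ▸ card_le_card (insert_subset haS (singleton_subset_iff.mpr hbS))
  rw [dTD_eq_sum_sizeWeight, pairWeight, mul_sum, sum_filter, sum_filter]
  refine sum_congr rfl fun S _ => ?_
  rw [topDiff_swap_mul_of_top_two hab ha hb]
  by_cases hS : a ∈ S ∧ b ∈ S
  · rw [if_pos hS, if_pos hS, if_pos (h_card S hS), sum_pair hab, mul_comm]
  · simp [hS]

end TopTwo

lemma exists_perm_top_two {a b : Fin n} (hab : a ≠ b) :
    ∃ σ : Perm (Fin n), (∀ x, σ.symm a ≤ σ.symm x) ∧ ∀ x ≠ a, σ.symm b ≤ σ.symm x := by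
  obtain ⟨m, rfl⟩ : ∃ m, n = m + 2 :=
    ⟨n - 2, by have := Fin.val_ne_of_ne hab; omega⟩
  set c := swap a 0 b with hc
  have hc0 : c ≠ 0 := by
    rw [hc, Ne, swap_apply_eq_iff, swap_apply_right]
    exact hab.symm
  set σ : Perm (Fin (m + 2)) := (swap 1 c * swap a 0).symm
  have hσa : σ.symm a = 0 := by simp [σ, swap_apply_of_ne_of_ne zero_ne_one hc0.symm]
  have hσb : σ.symm b = 1 := by simp [σ, ← hc]
  refine ⟨σ, fun x => hσa ▸ Fin.zero_le _, fun x hx => hσb ▸ Fin.one_le_of_ne_zero ?_⟩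
  exact hσa ▸ σ.symm.injective.ne hx

lemma pairWeight_ne_zero_of_dTD_eq_zero {β : Fin (n - 1) → ℝ}
    (hβ : ∀ σ π, dTD n β (fun _ => 1) σ π = 0 → σ = π) {a b : Fin n} (hab : a ≠ b) :
    pairWeight β a b ≠ 0 := by
  intro h_zero
  obtain ⟨σ, ha, hb⟩ := exists_perm_top_two hab
  have h_dist := dTD_swap_mul_of_top_two hab ha hb β fun _ => (1 : ℝ)
  rw [h_zero, mul_zero] at h_dist
  have h_swap := DFunLike.congr_fun (hβ _ _ h_dist) (σ.symm a)
  simp only [Perm.mul_apply, apply_symm_apply, swap_apply_left] at h_swap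
  exact hab h_swap

end TopDifference

lemma eq_of_forall_add_eq_add {α : Type*} [Fintype α] (hα : 3 ≤ Fintype.card α)
    {μ ν : α → ℝ} (h : ∀ a b, a ≠ b → μ a + μ b = ν a + ν b) : μ = ν := by
  classical
  funext x
  have h_card : 1 < (univ.erase x).card := by
    rw [card_erase_of_mem (mem_univ x), card_univ]
    omega
  obtain ⟨y, hy, z, hz, hyz⟩ := one_lt_card.mp h_card
  have hxy := h x y (ne_of_mem_erase hy).symm
  have hxz := h x z (ne_of_mem_erase hz).symm
  have hyz := h y z hyz
  linarith

open TopDifference in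
theorem stmt2 (n : ℕ) (hn : 3 ≤ n) (β : Fin (n - 1) → ℝ)
    (hβ : IsMetricFn (dTD n β fun _ => (1 : ℝ)) ∨
          IsMetricFn (dTD n (-β) fun _ => (1 : ℝ)))
    (μ ν : Fin n → ℝ) :
    dTD n β μ = dTD n β ν ↔ μ = ν := by
  refine ⟨fun h => ?_, fun h => h ▸ rfl⟩
  have h_weight : ∀ a b : Fin n, a ≠ b → pairWeight β a b ≠ 0 := by
    rcases hβ with hβ | hβ
    · exact fun a b hab => pairWeight_ne_zero_of_dTD_eq_zero hβ.2 hab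
    · intro a b hab
      simpa [pairWeight_neg] using pairWeight_ne_zero_of_dTD_eq_zero hβ.2 hab
  refine eq_of_forall_add_eq_add (by simpa using hn) fun a b hab => ?_
  obtain ⟨σ, ha, hb⟩ := exists_perm_top_two hab
  have h_dist := congrFun (congrFun h σ) (swap a b * σ)
  rw [dTD_swap_mul_of_top_two hab ha hb, dTD_swap_mul_of_top_two hab ha hb] at h_dist
  exact mul_right_cancel₀ (h_weight a b hab) h_dist
end
end

section
/- A semimetric d on S_n satisfies Axiom A.1 if and only if there exists a symmetric function g : [n]² → ℝ₊ with g(i,i) = 0 for all i ∈ [n] such that for all σ, π ∈ S_n, d(σ,π) = Σ_{(i,j) ∈ I(σ,π)} g(i,j). -/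
open Finset

noncomputable section

/-- `ω` is between `σ` and `π`: whenever `σ` and `π` agree on a pair, so does `ω`. -/
def Between {n : ℕ} (σ ω π : Equiv.Perm (Fin n)) : Prop :=
  ∀ i j : Fin n, i ≠ j →
    (σ.symm i < σ.symm j ∧ π.symm i < π.symm j) → ω.symm i < ω.symm j

/-- The inversion set `I(σ,π) = {(i,j) : i >_σ j and i <_π j}`. -/
def inversions {n : ℕ} (σ π : Equiv.Perm (Fin n)) : Finset (Fin n × Fin n) :=
  Finset.univ.filter fun p => σ.symm p.1 < σ.symm p.2 ∧ π.symm p.2 < π.symm p.1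

/-- Axiom A.1. -/
def AxA1 {n : ℕ} (d : Equiv.Perm (Fin n) → Equiv.Perm (Fin n) → ℝ) : Prop :=
  ∀ σ ω π : Equiv.Perm (Fin n), Between σ ω π → d π σ = d π ω + d ω σ


/-!
If `ω` is between `σ` and `π`, the inversion set `I(π,σ)` is the disjoint union of `I(π,ω)` and
`I(ω,σ)`, so every inversion-weighted sum satisfies A.1. Conversely, call `(σ,τ)` a flip of
`(a,b)` when `I(σ,τ) = {(a,b)}`. Four instances of A.1 relating two flips of the same pair show
that `d` takes the same value on all of them; this value is the weight `g(a,b)`. If `σ ≠ π`, some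
adjacent pair of `σ` is inverted in `π`, and transposing it gives a flip `(σ,ω)` with `ω` between
`σ` and `π` and one inversion fewer towards `π`, so induction on `|I(σ,π)|` gives `d = ∑ g`.
-/

open Equiv Finset

section Inversions

variable {n : ℕ} {σ ω π : Perm (Fin n)}

@[simp] lemma mem_inversions {p : Fin n × Fin n} :
    p ∈ inversions σ π ↔ σ.symm p.1 < σ.symm p.2 ∧ π.symm p.2 < π.symm p.1 := by
  simp [inversions]

lemma inversions_eq_singleton_swap {a b : Fin n} (h : inversions σ π = {(a, b)}) :
    inversions π σ = {(b, a)} := by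
  ext ⟨x, y⟩
  have := congrArg (fun s => (y, x) ∈ s) h
  simp only [mem_inversions, mem_singleton, Prod.mk.injEq, eq_iff_iff] at this ⊢
  rw [and_comm, this, and_comm]

lemma inversions_self : inversions σ σ = ∅ := by
  ext ⟨x, y⟩
  simpa using fun h : σ.symm x < σ.symm y => h.le

lemma disjoint_inversions (σ ω π : Perm (Fin n)) :
    Disjoint (inversions σ ω) (inversions ω π) :=
  disjoint_left.2 fun _ h₁ h₂ => lt_asymm (mem_inversions.1 h₁).2 (mem_inversions.1 h₂).1

lemma lt_of_notMem_inversions {i j : Fin n} (hσ : σ.symm i < σ.symm j)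
    (h : (i, j) ∉ inversions σ π) : π.symm i < π.symm j := by
  rw [mem_inversions, not_and, not_lt] at h
  exact (h hσ).lt_of_ne (π.symm.injective.ne (σ.symm.injective.ne_iff.1 hσ.ne))

lemma eq_of_strictMono_symm_comp (h : StrictMono (π.symm ∘ σ)) : σ = π :=
  Equiv.ext fun _ => (π.symm_apply_eq).1 h.apply_eq

lemma inversions_eq_empty_iff : inversions σ π = ∅ ↔ σ = π := by
  refine ⟨fun h => eq_of_strictMono_symm_comp fun k l hkl => ?_, fun h => h ▸ inversions_self⟩
  have hnot : (σ k, σ l) ∉ inversions σ π := by simp [h]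
  simpa using lt_of_notMem_inversions (by simpa) hnot

lemma exists_succ_mem_inversions (h : (inversions σ π).Nonempty) :
    ∃ k l : Fin n, (l : ℕ) = k + 1 ∧ (σ k, σ l) ∈ inversions σ π := by
  obtain ⟨m, rfl⟩ : ∃ m, n = m + 1 := Nat.exists_eq_add_one.2 (Fin.pos h.choose.1)
  by_contra! hno
  refine h.ne_empty (inversions_eq_empty_iff.2 (eq_of_strictMono_symm_comp ?_))
  refine Fin.strictMono_iff_lt_succ.2 fun k => ?_
  simpa using lt_of_notMem_inversions (by simp) (hno k.castSucc k.succ (by simp))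

lemma lt_and_swap_apply_lt_iff {k l u v : Fin n} (hkl : (l : ℕ) = k + 1) :
    u < v ∧ swap k l v < swap k l u ↔ u = k ∧ v = l := by
  simp only [swap_apply_def]
  split_ifs <;> simp only [Fin.lt_def, Fin.ext_iff] at * <;> omega

lemma inversions_mul_swap {k l : Fin n} (hkl : (l : ℕ) = k + 1) :
    inversions σ (σ * swap k l) = {(σ k, σ l)} := by
  ext ⟨x, y⟩
  obtain ⟨u, rfl⟩ := σ.surjective x
  obtain ⟨v, rfl⟩ := σ.surjective y
  simp [Perm.mul_def, lt_and_swap_apply_lt_iff hkl]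

end Inversions

section Between

variable {n : ℕ} {σ ω π : Perm (Fin n)}

lemma Between.symm (h : Between σ ω π) : Between π ω σ :=
  fun i j hij hσπ => h i j hij hσπ.symm

lemma Between.inversions_eq_union (h : Between σ ω π) :
    inversions σ π = inversions σ ω ∪ inversions ω π := by
  ext ⟨i, j⟩
  simp only [mem_union, mem_inversions]
  constructor
  · rintro ⟨hσ, hπ⟩
    have hij : i ≠ j := σ.symm.injective.ne_iff.1 hσ.ne
    rcases (ω.symm.injective.ne hij).lt_or_gt with hω | hω
    · exact .inr ⟨hω, hπ⟩
    · exact .inl ⟨hσ, hω⟩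
  · rintro (⟨hσ, hω⟩ | ⟨hω, hπ⟩)
    · have hij : i ≠ j := ne_of_apply_ne _ hσ.ne
      refine ⟨hσ, lt_of_not_ge fun hπ => lt_asymm hω (h i j hij ⟨hσ, ?_⟩)⟩
      exact hπ.lt_of_ne (π.symm.injective.ne hij)
    · have hji : j ≠ i := ne_of_apply_ne _ hπ.ne
      refine ⟨lt_of_not_ge fun hσ => lt_asymm hω (h j i hji ⟨?_, hπ⟩), hπ⟩
      exact hσ.lt_of_ne (σ.symm.injective.ne hji)

lemma between_of_inversions_subset (h : inversions σ ω ⊆ inversions σ π) : Between σ ω π := by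
  intro i j hij ⟨hσ, hπ⟩
  by_contra hω
  have hmem : (i, j) ∈ inversions σ ω :=
    mem_inversions.2 ⟨hσ, (not_lt.1 hω).lt_of_ne (ω.symm.injective.ne hij.symm)⟩
  exact lt_asymm hπ (mem_inversions.1 (h hmem)).2

lemma between_of_inversions_eq_singleton {a b : Fin n} (h : inversions σ ω = {(a, b)})
    (hπ : π.symm b < π.symm a) : Between σ ω π := by
  have hab : (a, b) ∈ inversions σ ω := by simp [h]
  refine between_of_inversions_subset ?_
  rw [h, singleton_subset_iff, mem_inversions]
  exact ⟨(mem_inversions.1 hab).1, hπ⟩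

end Between

lemma axA1_sum_inversions {n : ℕ} (g : Fin n → Fin n → ℝ) :
    AxA1 fun σ π => ∑ p ∈ inversions σ π, g p.1 p.2 := fun σ ω π h => by
  dsimp only
  rw [h.symm.inversions_eq_union, sum_union (disjoint_inversions π ω σ)]

section Weight

variable {n : ℕ} {d : Perm (Fin n) → Perm (Fin n) → ℝ}

lemma dist_eq_of_inversions_eq_singleton (hs : ∀ x y, d x y = d y x) (hA : AxA1 d)
    {a b : Fin n} {σ τ σ' τ' : Perm (Fin n)}
    (h : inversions σ τ = {(a, b)}) (h' : inversions σ' τ' = {(a, b)}) : d σ τ = d σ' τ' := by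
  have hστ : (a, b) ∈ inversions σ τ := by simp [h]
  have hστ' : (a, b) ∈ inversions σ' τ' := by simp [h']
  rw [mem_inversions] at hστ hστ'
  have e₁ := hA τ' σ' σ
    (between_of_inversions_eq_singleton (inversions_eq_singleton_swap h') hστ.1)
  have e₂ := hA σ' τ' τ (between_of_inversions_eq_singleton h' hστ.2)
  have e₃ := hA τ σ σ'
    (between_of_inversions_eq_singleton (inversions_eq_singleton_swap h) hστ'.1)
  have e₄ := hA σ τ τ' (between_of_inversions_eq_singleton h hστ'.2)
  linarith [hs σ τ', hs τ σ', hs σ σ', hs τ τ', hs σ τ, hs σ' τ']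

variable (d) in
/-- Under A.1 the chosen pair does not matter, by `dist_eq_of_inversions_eq_singleton`. -/
def inversionWeight (a b : Fin n) : ℝ :=
  if h : ∃ στ : Perm (Fin n) × Perm (Fin n), inversions στ.1 στ.2 = {(a, b)} then
    d h.choose.1 h.choose.2
  else 0

lemma dist_eq_inversionWeight (hs : ∀ x y, d x y = d y x) (hA : AxA1 d) {a b : Fin n}
    {σ τ : Perm (Fin n)} (h : inversions σ τ = {(a, b)}) : d σ τ = inversionWeight d a b := by
  have hex : ∃ στ : Perm (Fin n) × Perm (Fin n), inversions στ.1 στ.2 = {(a, b)} := ⟨(σ, τ), h⟩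
  rw [inversionWeight, dif_pos hex]
  exact dist_eq_of_inversions_eq_singleton hs hA h hex.choose_spec

lemma inversionWeight_nonneg (hd : ∀ x y, 0 ≤ d x y) (a b : Fin n) :
    0 ≤ inversionWeight d a b := by
  unfold inversionWeight
  split_ifs
  exacts [hd _ _, le_rfl]

lemma inversionWeight_self (a : Fin n) : inversionWeight d a a = 0 := by
  refine dif_neg fun ⟨⟨σ, τ⟩, h⟩ => ?_
  have haa : (a, a) ∈ inversions σ τ := by simp [h]
  exact lt_irrefl _ (mem_inversions.1 haa).1

lemma inversionWeight_comm (hs : ∀ x y, d x y = d y x) (hA : AxA1 d) (a b : Fin n) :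
    inversionWeight d a b = inversionWeight d b a := by
  by_cases hex : ∃ στ : Perm (Fin n) × Perm (Fin n), inversions στ.1 στ.2 = {(a, b)}
  · obtain ⟨⟨σ, τ⟩, h⟩ := hex
    rw [← dist_eq_inversionWeight hs hA h,
      ← dist_eq_inversionWeight hs hA (inversions_eq_singleton_swap h), hs]
  · have hex' : ¬∃ στ : Perm (Fin n) × Perm (Fin n), inversions στ.1 στ.2 = {(b, a)} :=
      fun ⟨⟨σ, τ⟩, h⟩ => hex ⟨(τ, σ), inversions_eq_singleton_swap h⟩
    rw [inversionWeight, inversionWeight, dif_neg hex, dif_neg hex']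

theorem eq_sum_inversionWeight (hs : ∀ x y, d x y = d y x) (h₀ : ∀ x, d x x = 0) (hA : AxA1 d)
    (σ π : Perm (Fin n)) : d σ π = ∑ p ∈ inversions σ π, inversionWeight d p.1 p.2 := by
  induction hN : #(inversions σ π) using Nat.strong_induction_on generalizing σ with
  | _ N ih =>
  rcases (inversions σ π).eq_empty_or_nonempty with h | h
  · rw [h, sum_empty, inversions_eq_empty_iff.1 h, h₀]
  obtain ⟨k, l, hkl, hmem⟩ := exists_succ_mem_inversions h
  set ω := σ * swap k l
  have hω : inversions σ ω = {(σ k, σ l)} := inversions_mul_swap hkl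
  have hbet : Between σ ω π := between_of_inversions_subset (hω ▸ singleton_subset_iff.2 hmem)
  have hsplit := hbet.inversions_eq_union
  have hdisj := disjoint_inversions σ ω π
  have hlt : #(inversions ω π) < N := by
    rw [← hN, hsplit, card_union_of_disjoint hdisj, hω, card_singleton]
    omega
  calc d σ π = d σ ω + d ω π := by linarith [hA σ ω π hbet, hs σ π, hs π ω, hs ω σ]
    _ = inversionWeight d (σ k) (σ l) + ∑ p ∈ inversions ω π, inversionWeight d p.1 p.2 := by
      rw [dist_eq_inversionWeight hs hA hω, ih _ hlt ω rfl]
    _ = ∑ p ∈ inversions σ π, inversionWeight d p.1 p.2 := by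
      rw [hsplit, sum_union hdisj, hω, sum_singleton]

end Weight

theorem stmt5_general (n : ℕ)
    (d : Equiv.Perm (Fin n) → Equiv.Perm (Fin n) → ℝ) (hd : IsSemimetric d) :
    AxA1 d ↔
      ∃ g : Fin n → Fin n → ℝ,
        (∀ i j, 0 ≤ g i j) ∧ (∀ i j, g i j = g j i) ∧ (∀ i, g i i = 0) ∧
          ∀ σ π : Equiv.Perm (Fin n), d σ π = ∑ p ∈ inversions σ π, g p.1 p.2 := by
  obtain ⟨hpos, hs, h₀, -⟩ := hd
  constructor
  · intro hA
    exact ⟨inversionWeight d, inversionWeight_nonneg hpos, inversionWeight_comm hs hA,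
      inversionWeight_self, eq_sum_inversionWeight hs h₀ hA⟩
  · rintro ⟨g, -, -, -, hg⟩
    obtain rfl : d = fun σ π => ∑ p ∈ inversions σ π, g p.1 p.2 := funext₂ hg
    exact axA1_sum_inversions g

theorem stmt5 (n : ℕ) (hn : 2 ≤ n)
    (d : Equiv.Perm (Fin n) → Equiv.Perm (Fin n) → ℝ) (hd : IsSemimetric d) :
    AxA1 d ↔
      ∃ g : Fin n → Fin n → ℝ,
        (∀ i j, 0 ≤ g i j) ∧ (∀ i j, g i j = g j i) ∧ (∀ i, g i i = 0) ∧
          ∀ σ π : Equiv.Perm (Fin n), d σ π = ∑ p ∈ inversions σ π, g p.1 p.2 :=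
  stmt5_general n d hd
end
end

section
/- Let F : ℝ^{n−1} → ℝ^{n−1} map β = (β_2,…,β_n) to φ with φ_a := Σ_{k=2}^n β_k · C(n−a−1, k−2) for a = 1,…,n−1, and let B*_n := (0,∞) × ℝ₊^{n−2}. Then F(B*_n) = { φ ∈ (0,∞)^{n−1} : for all integers k with 0 ≤ k < n and all integers j with 1 ≤ j < n−k, (−1)^k (Δ^k φ)_j ≥ 0 }, where (Δ^k f)_j := Σ_{i=0}^k (−1)^{i+k} C(k,i) f(j+i). -/
open Finset

noncomputable section

/-- `F(β)_a = Σ_{k=2}^n β_k C(n-a-1, k-2)` for `a = 1,…,n-1`;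
index `a : Fin (n-1)` encodes the position `a.1 + 1`. -/
def Fmap (n : ℕ) (β : Fin (n - 1) → ℝ) : Fin (n - 1) → ℝ :=
  fun a => ∑ k : Fin (n - 1), β k * (Nat.choose (n - (a.1 + 1) - 1) k.1 : ℝ)

/-- `(Δ^k f)_j = Σ_{i=0}^k (−1)^{i+k} C(k,i) f(j+i)`. -/
def finDiff (k j : ℕ) (f : ℕ → ℝ) : ℝ :=
  ∑ i ∈ Finset.range (k + 1), (-1 : ℝ) ^ (i + k) * (Nat.choose k i : ℝ) * f (j + i)

/-- Extension of `φ = (φ_1,…,φ_{n-1})` to a function on `ℕ` (`φ j` for `1 ≤ j ≤ n-1`). -/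
def phiExt (n : ℕ) (φ : Fin (n - 1) → ℝ) (j : ℕ) : ℝ :=
  if h : j - 1 < n - 1 then φ ⟨j - 1, h⟩ else 0

/-!
Reverse the sequence: with `h m = φ_{n-1-m}`, the map `F` reads `h m = ∑_r β_r C(m, r)`, a Newton
series, and `(-1)^k (Δ^k φ)_j = (Δ^k h)_{n-1-j-k}`. Since `Δ^k C(·, r) = C(·, r-k)` (or `0` when
`k > r`), nonnegative coefficients give nonnegative forward differences of every order. Conversely
the Gregory–Newton formula writes `h` as the Newton series with coefficients `β_r = (Δ^r h)_0`,
and these are the assumed inequalities at `j = n-1-r`.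
-/

open fwdDiff

lemma fwdDiff_iter_natCast_choose {R : Type*} [Ring R] (r k x : ℕ) :
    (Δ_[1])^[k] (fun x : ℕ ↦ (x.choose r : R)) x = if k ≤ r then (x.choose (r - k) : R) else 0 := by
  induction k generalizing r with
  | zero => simp
  | succ k ih =>
    rw [Function.iterate_succ_apply]
    rcases r with _ | r
    · simp [Function.iterate_fixed (fwdDiff_const (h := (1 : ℕ)) (0 : R))]
    · have : Δ_[1] (fun x : ℕ ↦ (x.choose (r + 1) : R)) = fun x ↦ (x.choose r : R) := by
        ext x
        simp [fwdDiff, Nat.choose_succ_succ']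
      simp [this, ih]

lemma neg_one_pow_mul_finDiff_eq_fwdDiff_iter {g h : ℕ → ℝ} {k j m : ℕ}
    (hgh : ∀ i ≤ k, g (j + i) = h (m + (k - i))) :
    (-1) ^ k * finDiff k j g = (Δ_[1])^[k] h m := by
  rw [fwdDiff_iter_eq_sum_shift, ← sum_range_reflect, finDiff, mul_sum]
  refine sum_congr rfl fun i hi ↦ ?_
  have hik : i ≤ k := Nat.lt_succ_iff.mp (mem_range.mp hi)
  have hsign : (-1 : ℝ) ^ k * (-1) ^ (i + k) = (-1) ^ i := by
    rw [← pow_add, show k + (i + k) = i + 2 * k by ring, pow_add, pow_mul, neg_one_sq, one_pow,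
      mul_one]
  rw [hgh i hik, show k + 1 - 1 - i = k - i by omega, Nat.choose_symm hik,
    show k - (k - i) = i by omega, smul_eq_mul, mul_one, zsmul_eq_mul, ← mul_assoc, ← mul_assoc,
    hsign]
  push_cast
  ring

def newtonSeries {N : ℕ} (β : Fin N → ℝ) (m : ℕ) : ℝ :=
  ∑ r, β r * (m.choose r : ℝ)

section newtonSeries

variable {N : ℕ} {β : Fin N → ℝ}

lemma fwdDiff_iter_newtonSeries (k m : ℕ) :
    (Δ_[1])^[k] (newtonSeries β) m =
      ∑ r, β r * (if k ≤ r then (m.choose (r - k) : ℝ) else 0) := by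
  have : newtonSeries β = ∑ r, β r • fun m : ℕ ↦ (m.choose r : ℝ) := by
    ext m
    simp [newtonSeries]
  simp [this, fwdDiff_iter_natCast_choose]

lemma fwdDiff_iter_newtonSeries_nonneg (hβ : 0 ≤ β) (k m : ℕ) :
    0 ≤ (Δ_[1])^[k] (newtonSeries β) m := by
  rw [fwdDiff_iter_newtonSeries]
  exact sum_nonneg fun r _ ↦ mul_nonneg (hβ r) (by split_ifs <;> positivity)

lemma newtonSeries_pos (hβ : 0 ≤ β) {i : Fin N} (hi : 0 < β i) {m : ℕ} (him : (i : ℕ) ≤ m) :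
    0 < newtonSeries β m :=
  calc 0 < β i * (m.choose i : ℝ) := mul_pos hi (by exact_mod_cast Nat.choose_pos him)
    _ ≤ newtonSeries β m :=
      single_le_sum (f := fun r ↦ β r * (m.choose r : ℝ))
        (fun r _ ↦ mul_nonneg (hβ r) (Nat.cast_nonneg _)) (mem_univ i)

end newtonSeries

lemma newtonSeries_fwdDiff_iter (h : ℕ → ℝ) {N t : ℕ} (ht : t < N) :
    newtonSeries (fun r : Fin N ↦ (Δ_[1])^[r] h 0) t = h t := by
  have hnewton := shift_eq_sum_fwdDiff_iter 1 h t 0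
  rw [zero_add, smul_eq_mul, mul_one] at hnewton
  rw [hnewton, newtonSeries, Fin.sum_univ_eq_sum_range (fun r ↦ (Δ_[1])^[r] h 0 * (t.choose r : ℝ))]
  rw [← sum_subset (range_subset_range.2 (show t + 1 ≤ N by omega)) fun r _ hr ↦ by
    rw [Nat.choose_eq_zero_of_lt (by simpa using hr), Nat.cast_zero, mul_zero]]
  exact sum_congr rfl fun r _ ↦ by rw [nsmul_eq_mul, mul_comm]

lemma phiExt_add_one {n : ℕ} (φ : Fin (n - 1) → ℝ) (a : Fin (n - 1)) :
    phiExt n φ (a + 1) = φ a := by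
  simp [phiExt]

lemma Fmap_apply_eq_newtonSeries (n : ℕ) (β : Fin (n - 1) → ℝ) (a : Fin (n - 1)) :
    Fmap n β a = newtonSeries β (n - 2 - a) := by
  rw [Fmap, newtonSeries, show n - (a + 1) - 1 = n - 2 - a by omega]

lemma phiExt_Fmap {n j : ℕ} (β : Fin (n - 1) → ℝ) (hj : 1 ≤ j) (hjn : j ≤ n - 1) :
    phiExt n (Fmap n β) j = newtonSeries β (n - 1 - j) := by
  obtain ⟨a, rfl⟩ : ∃ a : Fin (n - 1), j = a + 1 := ⟨⟨j - 1, by omega⟩, by simp; omega⟩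
  rw [phiExt_add_one, Fmap_apply_eq_newtonSeries, show n - 2 - a = n - 1 - (a + 1) by omega]

theorem stmt9_general (n : ℕ) (φ : Fin (n - 1) → ℝ) :
    (∃ β : Fin (n - 1) → ℝ,
      ((∀ k : Fin (n - 1), k.1 = 0 → 0 < β k) ∧
        (∀ k : Fin (n - 1), k.1 ≠ 0 → 0 ≤ β k)) ∧ Fmap n β = φ) ↔
      ((∀ a, 0 < φ a) ∧
        ∀ k j : ℕ, k < n → 1 ≤ j → j < n - k →
          0 ≤ (-1 : ℝ) ^ k * finDiff k j (phiExt n φ)) := by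
  constructor
  · rintro ⟨β, ⟨hβ₀, hβ⟩, rfl⟩
    have hβnn : 0 ≤ β := fun r ↦ if hr : r.1 = 0 then (hβ₀ r hr).le else hβ r hr
    refine ⟨fun a ↦ ?_, fun k j _ hj hjk ↦ ?_⟩
    · rw [Fmap_apply_eq_newtonSeries]
      exact newtonSeries_pos hβnn (hβ₀ ⟨0, Nat.zero_lt_of_lt a.isLt⟩ rfl) (Nat.zero_le _)
    · rw [neg_one_pow_mul_finDiff_eq_fwdDiff_iter (h := newtonSeries β) (m := n - 1 - j - k)
        fun i _ ↦ by rw [phiExt_Fmap β (by omega) (by omega)]; congr 1; omega]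
      exact fwdDiff_iter_newtonSeries_nonneg hβnn _ _
  · rintro ⟨hφ, hΔ⟩
    set h : ℕ → ℝ := fun m ↦ phiExt n φ (n - 1 - m) with h_def
    refine ⟨fun r ↦ (Δ_[1])^[r] h 0, ⟨fun r hr ↦ ?_, fun r _ ↦ ?_⟩, funext fun a ↦ ?_⟩
    · have hlast := phiExt_add_one φ ⟨n - 2, by omega⟩
      simp only [hr, Function.iterate_zero_apply, h_def, Nat.sub_zero]
      rw [show n - 1 = n - 2 + 1 by omega, hlast]
      exact hφ _
    · dsimp only
      rw [← neg_one_pow_mul_finDiff_eq_fwdDiff_iter (h := h) (j := n - 1 - r) (m := 0)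
        fun i _ ↦ congrArg (phiExt n φ) (by omega)]
      exact hΔ r (n - 1 - r) (by omega) (by omega) (by omega)
    · rw [Fmap_apply_eq_newtonSeries, newtonSeries_fwdDiff_iter h (by omega), h_def]
      dsimp only
      rw [show n - 1 - (n - 2 - a) = a + 1 by omega, phiExt_add_one]

theorem stmt9 (n : ℕ) (hn : 2 ≤ n) (φ : Fin (n - 1) → ℝ) :
    (∃ β : Fin (n - 1) → ℝ,
      ((∀ k : Fin (n - 1), k.1 = 0 → 0 < β k) ∧
        (∀ k : Fin (n - 1), k.1 ≠ 0 → 0 ≤ β k)) ∧ Fmap n β = φ) ↔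
      ((∀ a, 0 < φ a) ∧
        ∀ k j : ℕ, k < n → 1 ≤ j → j < n - k →
          0 ≤ (-1 : ℝ) ^ k * finDiff k j (phiExt n φ)) :=
  stmt9_general n φ
end
end

section
/- Let n ≥ 3 and let d be a metric on S_n satisfying Axiom A.3. Then (S_n, d) cannot be isometrically embedded into any strictly convex real normed linear space; i.e., there is no real normed vector space E that is strictly convex together with a map f : S_n → E satisfying ‖f(σ) − f(π)‖ = d(σ,π) for all σ, π ∈ S_n. -/
open Finset

noncomputable section

/-- Kendall distance. -/
def kendall {n : ℕ} (σ π : Equiv.Perm (Fin n)) : ℕ := (inversions σ π).card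

/-- The adjacent transposition of positions `a` and `a+1` (0-based). -/
def adjT (n : ℕ) (a : ℕ) : Equiv.Perm (Fin n) :=
  if h : a + 1 < n then Equiv.swap ⟨a, Nat.lt_of_succ_lt h⟩ ⟨a + 1, h⟩ else 1

/-- `L ∈ T(σ,π)`: a list of (0-based) positions of adjacent transpositions, of length
`d_K(σ,π)`, transforming `σ` into `π` by right multiplication. -/
def IsAdjPath {n : ℕ} (σ π : Equiv.Perm (Fin n)) (L : List ℕ) : Prop :=
  (∀ a ∈ L, a + 1 < n) ∧ L.length = kendall σ π ∧ σ * (L.map (adjT n)).prod = π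

/-- The cost of a path starting at `σ`: at each step the swap occurs at position `a`
(0-based) and exchanges the candidates `τ a` and `τ (a+1)` of the current ranking `τ`. -/
def pathCost {n : ℕ} (g : ℕ → Fin n → Fin n → ℝ) :
    Equiv.Perm (Fin n) → List ℕ → ℝ
  | _, [] => 0
  | σ, a :: L =>
      (if h : a + 1 < n then g a (σ ⟨a, Nat.lt_of_succ_lt h⟩) (σ ⟨a + 1, h⟩) else 0)
        + pathCost g (σ * adjT n a) L

/-- Axiom A.3. -/
def AxA3 {n : ℕ} (d : Equiv.Perm (Fin n) → Equiv.Perm (Fin n) → ℝ) : Prop :=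
  ∀ σ π : Equiv.Perm (Fin n), 2 ≤ kendall σ π →
    ∃ ω : Equiv.Perm (Fin n), ω ≠ σ ∧ ω ≠ π ∧ Between σ ω π ∧
      d σ π = d σ ω + d ω π


/-!
The six rankings that permute the top three candidates and fix all others form a hexagon in
which consecutive rankings differ by one adjacent transposition, and the only ranking strictly
between two rankings at distance two along the hexagon is the one in the middle. Axiom A.3
therefore forces `d(ρₖ, ρₖ₊₂) = d(ρₖ, ρₖ₊₁) + d(ρₖ₊₁, ρₖ₊₂)` all around the hexagon. In a
strictly convex space equality in the triangle inequality means strict betweenness, so the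
images of the six rankings would march monotonically along one line and yet return to their
starting point.
-/

open Equiv Equiv.Perm

theorem Fin.apply_eq_self_of_injective_of_lt {n m : ℕ} {g : Fin n → Fin n}
    (hg : Function.Injective g) (H : ∀ i j : Fin n, i < j → m ≤ (j : ℕ) → g i < g j)
    {j : Fin n} (hj : m ≤ (j : ℕ)) : g j = j := by
  have hle : (j : ℕ) ≤ g j := by
    simpa using card_le_card_of_injOn g (s := Iio j) (t := Iio (g j))
      (fun i hi => by simpa using H i j (by simpa using hi) hj) hg.injOn
  have hge : n - 1 - (j : ℕ) ≤ n - 1 - g j := by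
    simpa using card_le_card_of_injOn g (s := Ioi j) (t := Ioi (g j))
      (fun k hk => by
        have hjk : j < k := mem_Ioi.mp hk
        simpa using H j k hjk (hj.trans hjk.le)) hg.injOn
  have := (g j).isLt
  exact Fin.ext (by omega)

section LiftPerm

variable {m n : ℕ} (h : m ≤ n)

/-- As a ranking, `liftPerm h τ` puts the candidates `Fin m` in the top `m` positions in the
order `τ` and leaves every other candidate in its own position. -/
def liftPerm (τ : Perm (Fin m)) : Perm (Fin n) :=
  τ.extendDomain (Fin.castLEquiv h)

@[simp]
theorem liftPerm_apply_castLE (τ : Perm (Fin m)) (i : Fin m) :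
    liftPerm h τ (Fin.castLE h i) = Fin.castLE h (τ i) :=
  extendDomain_apply_image τ (Fin.castLEquiv h) i

theorem liftPerm_apply_of_le (τ : Perm (Fin m)) {j : Fin n} (hj : m ≤ (j : ℕ)) :
    liftPerm h τ j = j :=
  extendDomain_apply_not_subtype τ (Fin.castLEquiv h) (not_lt.mpr hj)

theorem liftPerm_symm (τ : Perm (Fin m)) : (liftPerm h τ).symm = liftPerm h τ.symm :=
  extendDomain_symm τ (Fin.castLEquiv h)

theorem liftPerm_injective : Function.Injective (liftPerm (n := n) h) :=
  extendDomainHom_injective (Fin.castLEquiv h)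

theorem exists_liftPerm_eq {ω : Perm (Fin n)} (hω : ∀ j : Fin n, m ≤ (j : ℕ) → ω j = j) :
    ∃ τ, liftPerm h τ = ω := by
  have hlt : ∀ j : Fin n, (ω j : ℕ) < m ↔ (j : ℕ) < m := by
    intro j
    by_cases hj : (j : ℕ) < m
    · refine iff_of_true (not_le.mp fun hωj => ?_) hj
      exact hj.not_ge (by rwa [← ω.injective (hω _ hωj)])
    · rw [hω j (not_lt.mp hj)]
  refine ⟨(Fin.castLEquiv h).symm.permCongr (ω.subtypePerm hlt), Equiv.ext fun j => ?_⟩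
  by_cases hj : (j : ℕ) < m
  · rw [show j = Fin.castLE h ⟨j, hj⟩ from rfl, liftPerm_apply_castLE]
    simp [permCongr_apply]
  · rw [liftPerm_apply_of_le h _ (not_lt.mp hj), hω j (not_lt.mp hj)]

@[simp]
theorem liftPerm_symm_castLE_lt_iff (ρ : Perm (Fin m)) (i j : Fin m) :
    (liftPerm h ρ).symm (Fin.castLE h i) < (liftPerm h ρ).symm (Fin.castLE h j) ↔
      ρ.symm i < ρ.symm j := by
  simp [liftPerm_symm]

theorem liftPerm_symm_lt_symm (ρ : Perm (Fin m)) {i j : Fin n} (hij : i < j)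
    (hj : m ≤ (j : ℕ)) : (liftPerm h ρ).symm i < (liftPerm h ρ).symm j := by
  rw [liftPerm_symm, liftPerm_apply_of_le h _ hj]
  by_cases hi : (i : ℕ) < m
  · rw [show i = Fin.castLE h ⟨i, hi⟩ from rfl, liftPerm_apply_castLE, Fin.lt_def,
      Fin.val_castLE]
    exact (ρ.symm ⟨i, hi⟩).isLt.trans_le hj
  · rwa [liftPerm_apply_of_le h _ (not_lt.mp hi)]

theorem between_of_between_liftPerm {σ τ π : Perm (Fin m)}
    (hb : Between (liftPerm h σ) (liftPerm h τ) (liftPerm h π)) : Between σ τ π := by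
  intro i j hij hσπ
  simpa using hb _ _ ((Fin.castLE_injective h).ne hij) (by simpa using hσπ)

theorem kendall_le_kendall_liftPerm (σ π : Perm (Fin m)) :
    kendall σ π ≤ kendall (liftPerm h σ) (liftPerm h π) :=
  card_le_card_of_injOn (Prod.map (Fin.castLE h) (Fin.castLE h))
    (fun p hp => by simpa [inversions] using hp)
    ((Fin.castLE_injective h).prodMap (Fin.castLE_injective h)).injOn

theorem exists_liftPerm_eq_of_between {σ π : Perm (Fin m)} {ω : Perm (Fin n)}
    (hb : Between (liftPerm h σ) ω (liftPerm h π)) : ∃ τ, liftPerm h τ = ω := by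
  have hfix (j : Fin n) (hj : m ≤ (j : ℕ)) : ω.symm j = j :=
    Fin.apply_eq_self_of_injective_of_lt ω.symm.injective
      (fun i j hij hj => hb i j hij.ne
        ⟨liftPerm_symm_lt_symm h σ hij hj, liftPerm_symm_lt_symm h π hij hj⟩) hj
  exact exists_liftPerm_eq h fun j hj => (ω.symm_apply_eq.mp (hfix j hj)).symm

theorem eq_liftPerm_of_between {σ μ π : Perm (Fin m)}
    (hmid : ∀ τ, Between σ τ π → τ = σ ∨ τ = μ ∨ τ = π) {ω : Perm (Fin n)}
    (hb : Between (liftPerm h σ) ω (liftPerm h π)) :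
    ω = liftPerm h σ ∨ ω = liftPerm h μ ∨ ω = liftPerm h π := by
  obtain ⟨τ, rfl⟩ := exists_liftPerm_eq_of_between h hb
  rcases hmid τ (between_of_between_liftPerm h hb) with rfl | rfl | rfl <;> simp

end LiftPerm

/-- The permutohedron of `S₃`: neighbours differ by an adjacent transposition, and
`hexagon (k + 1)` is the only ranking strictly between `hexagon k` and `hexagon (k + 2)`. -/
def hexagon : ZMod 6 → Perm (Fin 3) :=
  ![1, swap 0 1, swap 0 1 * swap 1 2, swap 0 2, swap 1 2 * swap 0 1, swap 1 2]

theorem two_le_kendall_hexagon (k : ZMod 6) : 2 ≤ kendall (hexagon k) (hexagon (k + 2)) := by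
  revert k; decide

theorem eq_hexagon_of_between (k : ZMod 6) (ω : Perm (Fin 3))
    (hb : Between (hexagon k) ω (hexagon (k + 2))) :
    ω = hexagon k ∨ ω = hexagon (k + 1) ∨ ω = hexagon (k + 2) := by
  revert k ω; unfold Between; decide

theorem hexagon_succ_ne (k : ZMod 6) :
    hexagon (k + 1) ≠ hexagon k ∧ hexagon (k + 1) ≠ hexagon (k + 2) := by
  revert k; decide

theorem AxA3.eq_add_of_between {n : ℕ} {d : Perm (Fin n) → Perm (Fin n) → ℝ} (hA3 : AxA3 d)
    {σ μ π : Perm (Fin n)} (hk : 2 ≤ kendall σ π)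
    (hmid : ∀ ω, Between σ ω π → ω = σ ∨ ω = μ ∨ ω = π) : d σ π = d σ μ + d μ π := by
  obtain ⟨ω, hωσ, hωπ, hb, hd⟩ := hA3 σ π hk
  rcases hmid ω hb with h | rfl | h
  · exact absurd h hωσ
  · exact hd
  · exact absurd h hωπ

theorem sbtw_of_forall_sbtw_succ {R V P : Type*} [Field R] [LinearOrder R]
    [IsStrictOrderedRing R] [AddCommGroup V] [Module R V] [AddTorsor V P] {p : ℕ → P} {k : ℕ}
    (h : ∀ i ≤ k, Sbtw R (p i) (p (i + 1)) (p (i + 2))) :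
    Sbtw R (p 0) (p (k + 1)) (p (k + 2)) := by
  induction k with
  | zero => exact h 0 le_rfl
  | succ k ih => exact (ih fun i hi => h i (by omega)).trans_expand_right (h (k + 1) le_rfl)

theorem stmt10 (n : ℕ) (hn : 3 ≤ n)
    (d : Equiv.Perm (Fin n) → Equiv.Perm (Fin n) → ℝ) (hd : IsMetricFn d)
    (hA3 : AxA3 d)
    (E : Type*) [NormedAddCommGroup E] [NormedSpace ℝ E]
    (hE : ∀ (x y : E) (l : ℝ), x ≠ y → ‖x‖ = 1 → ‖y‖ = 1 → 0 < l → l < 1 →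
      ‖l • x + (1 - l) • y‖ < 1) :
    ¬ ∃ f : Equiv.Perm (Fin n) → E, ∀ σ π, ‖f σ - f π‖ = d σ π := by
  rintro ⟨f, hf⟩
  have : StrictConvexSpace ℝ E := .of_norm_combo_lt_one fun x y hx hy hxy =>
    ⟨1 / 2, 1 - 1 / 2, by ring, hE x y _ hxy hx hy (by norm_num) (by norm_num)⟩
  have hf_inj : Function.Injective f := fun σ π hσπ =>
    hd.2 σ π (by rw [← hf, hσπ, sub_self, norm_zero])
  let ρ (k : ZMod 6) : Perm (Fin n) := liftPerm hn (hexagon k)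
  have hsplit (k : ZMod 6) :
      d (ρ k) (ρ (k + 2)) = d (ρ k) (ρ (k + 1)) + d (ρ (k + 1)) (ρ (k + 2)) :=
    hA3.eq_add_of_between ((two_le_kendall_hexagon k).trans (kendall_le_kendall_liftPerm hn _ _))
      fun _ => eq_liftPerm_of_between hn (eq_hexagon_of_between k)
  have hsbtw (k : ZMod 6) : Sbtw ℝ (f (ρ k)) (f (ρ (k + 1))) (f (ρ (k + 2))) :=
    ⟨dist_add_dist_eq_iff.mp (by simp only [dist_eq_norm, hf, hsplit]),
      hf_inj.ne ((liftPerm_injective hn).ne (hexagon_succ_ne k).1),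
      hf_inj.ne ((liftPerm_injective hn).ne (hexagon_succ_ne k).2)⟩
  have hchain := sbtw_of_forall_sbtw_succ (p := fun i : ℕ => f (ρ i)) (k := 4) fun i _ => by
    simpa only [Nat.cast_add, Nat.cast_one, Nat.cast_ofNat] using hsbtw i
  -- the hexagon closes up: `((6 : ℕ) : ZMod 6) = 0`
  exact hchain.left_ne_right rfl
end
end

section
/- Let β ∈ ℝ₊^{n−1} and μ ∈ ℝ₊ⁿ. Then P^μ_β is monotone: if c ∈ W^μ_β(V) and V' is any profile of the same length as V in which each voter v'ʲ either equals vʲ or is an upranking of candidate c for vʲ, then c ∈ W^μ_β(V'). -/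
open Finset

noncomputable section

/-- Cumulative distance of `σ` to a profile of voters. -/
def dProf (n : ℕ) (β : Fin (n - 1) → ℝ) (μ : Fin n → ℝ)
    (σ : Equiv.Perm (Fin n)) (V : List (Equiv.Perm (Fin n))) : ℝ :=
  (V.map (dTD n β μ σ)).sum

/-- The median preference correspondence `P^μ_β`. -/
def Pmed (n : ℕ) (β : Fin (n - 1) → ℝ) (μ : Fin n → ℝ)
    (V : List (Equiv.Perm (Fin n))) : Set (Equiv.Perm (Fin n)) :=
  {σ | ∀ τ : Equiv.Perm (Fin n), dProf n β μ σ V ≤ dProf n β μ τ V}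

/-- The winner set `W^μ_β`: candidates ranked first by some consensus ranking. -/
def Wmed (n : ℕ) (hn : 0 < n) (β : Fin (n - 1) → ℝ) (μ : Fin n → ℝ)
    (V : List (Equiv.Perm (Fin n))) : Set (Fin n) :=
  {c | ∃ σ ∈ Pmed n β μ V, σ ⟨0, hn⟩ = c}

/-- `π` is an upranking of candidate `c` for `σ`. -/
def Uprank {n : ℕ} (c : Fin n) (σ π : Equiv.Perm (Fin n)) : Prop :=
  (∀ i j : Fin n, i ≠ c → j ≠ c → (σ.symm i < σ.symm j ↔ π.symm i < π.symm j)) ∧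
    ∃ i : Fin n, i ≠ c ∧ σ.symm i < σ.symm c ∧ π.symm c < π.symm i

/-!
If `σ` ranks `c` first, then replacing `V` by `V'` increases `d(σ, ·)` by no more than it
increases `d(τ, ·)`, for every ranking `τ`. Indeed, on each menu `S` the top of an upranked
voter `v'` is either the top of `v` (and nothing changes) or `c`, and in the latter case `σ`
already agrees with `v'` on `S`, so its distance can only drop, by at least as much as the
distance of `τ` drops when `μ ≥ 0`. Hence a median ranking for `V` that puts `c` first stays
a median ranking for `V'`.
-/

section

variable {α : Type*} [DecidableEq α]

lemma sum_symmDiff_singleton {M : Type*} [AddCommMonoid M] (f : α → M) (a b : α) :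
    ∑ x ∈ symmDiff {a} {b}, f x = if a = b then 0 else f a + f b := by
  split_ifs with hab
  · simp [hab]
  · rw [(disjoint_singleton.mpr hab).symmDiff_eq_sup, sup_eq_union, ← insert_eq,
      sum_pair hab]

lemma sum_symmDiff_singleton_sub_le {μ : α → ℝ} (hμ : ∀ i, 0 ≤ μ i) {s t a b : α}
    (h : b = a ∨ b = s) :
    ∑ x ∈ symmDiff {s} {b}, μ x - ∑ x ∈ symmDiff {s} {a}, μ x ≤
      ∑ x ∈ symmDiff {t} {b}, μ x - ∑ x ∈ symmDiff {t} {a}, μ x := by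
  rcases h with rfl | rfl
  · simp
  · simp only [sum_symmDiff_singleton]
    split_ifs <;> simp_all <;> linarith [hμ a, hμ b, hμ t]

end

section

variable {n : ℕ}

def RanksFirst (σ : Equiv.Perm (Fin n)) (S : Finset (Fin n)) (a : Fin n) : Prop :=
  a ∈ S ∧ ∀ y ∈ S, σ.symm a ≤ σ.symm y

lemma exists_ranksFirst (σ : Equiv.Perm (Fin n)) {S : Finset (Fin n)} (hS : S.Nonempty) :
    ∃ a, RanksFirst σ S a := by
  obtain ⟨a, ha, hmin⟩ := S.exists_min_image σ.symm hS
  exact ⟨a, ha, hmin⟩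

lemma RanksFirst.bestSet_eq {σ : Equiv.Perm (Fin n)} {S : Finset (Fin n)} {a : Fin n}
    (h : RanksFirst σ S a) : bestSet σ S = {a} := by
  ext x
  simp only [bestSet, mem_filter, mem_singleton]
  refine ⟨fun ⟨hx, hxmin⟩ => σ.symm.injective (le_antisymm (hxmin a h.1) (h.2 x hx)), ?_⟩
  rintro rfl
  exact h

lemma Uprank.lt_of_lt {c : Fin n} {v v' : Equiv.Perm (Fin n)} (h : Uprank c v v')
    {i j : Fin n} (hj : j ≠ c) (hij : v.symm i < v.symm j) : v'.symm i < v'.symm j := by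
  obtain ⟨hord, k, hkc, hvk, hv'k⟩ := h
  by_cases hic : i = c
  · subst hic
    by_contra hji
    have hji : v'.symm j < v'.symm i :=
      lt_of_le_of_ne (not_lt.mp hji) fun e => hj (v'.symm.injective e)
    rcases eq_or_ne k j with rfl | hkj
    · exact lt_asymm hji hv'k
    · exact lt_asymm (((hord k j hkc hj).mp (hvk.trans hij)).trans hji) hv'k
  · exact (hord i j hic hj).mp hij

lemma RanksFirst.eq_or_eq_of_lt_imp_lt {c : Fin n} {v v' : Equiv.Perm (Fin n)}
    (hpres : ∀ i j, j ≠ c → v.symm i < v.symm j → v'.symm i < v'.symm j)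
    {S : Finset (Fin n)} {a b : Fin n} (ha : RanksFirst v S a) (hb : RanksFirst v' S b) :
    b = a ∨ b = c := by
  by_contra! hne
  have hab : v.symm a < v.symm b :=
    lt_of_le_of_ne (ha.2 b hb.1) fun e => hne.1 (v.symm.injective e).symm
  exact (hpres a b hne.2 hab).not_ge (hb.2 a ha.1)

lemma sum_topDiff_sub_le {μ : Fin n → ℝ} (hμ : ∀ i, 0 ≤ μ i) {c : Fin n}
    {σ v v' : Equiv.Perm (Fin n)} (τ : Equiv.Perm (Fin n))
    (hσ : ∀ y, σ.symm c ≤ σ.symm y)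
    (hpres : ∀ i j, j ≠ c → v.symm i < v.symm j → v'.symm i < v'.symm j)
    {S : Finset (Fin n)} (hS : S.Nonempty) :
    ∑ x ∈ topDiff σ v' S, μ x - ∑ x ∈ topDiff σ v S, μ x ≤
      ∑ x ∈ topDiff τ v' S, μ x - ∑ x ∈ topDiff τ v S, μ x := by
  obtain ⟨s, hs⟩ := exists_ranksFirst σ hS
  obtain ⟨t, ht⟩ := exists_ranksFirst τ hS
  obtain ⟨a, ha⟩ := exists_ranksFirst v hS
  obtain ⟨b, hb⟩ := exists_ranksFirst v' hS
  simp only [topDiff, hs.bestSet_eq, ht.bestSet_eq, ha.bestSet_eq, hb.bestSet_eq]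
  refine sum_symmDiff_singleton_sub_le hμ ((ha.eq_or_eq_of_lt_imp_lt hpres hb).imp_right ?_)
  rintro rfl
  exact σ.symm.injective (le_antisymm (hσ s) (hs.2 b hb.1))

lemma dTD_sub_le {β : Fin (n - 1) → ℝ} (hβ : ∀ k, 0 ≤ β k) {μ : Fin n → ℝ}
    (hμ : ∀ i, 0 ≤ μ i) {c : Fin n} {σ v v' : Equiv.Perm (Fin n)} (τ : Equiv.Perm (Fin n))
    (hσ : ∀ y, σ.symm c ≤ σ.symm y) (hv : v' = v ∨ Uprank c v v') :
    dTD n β μ σ v' - dTD n β μ σ v ≤ dTD n β μ τ v' - dTD n β μ τ v := by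
  have hpres : ∀ i j, j ≠ c → v.symm i < v.symm j → v'.symm i < v'.symm j := by
    rcases hv with rfl | hup
    · exact fun _ _ _ => id
    · exact fun _ _ hj => hup.lt_of_lt hj
  simp only [dTD, ← sum_sub_distrib, ← mul_sub]
  refine sum_le_sum fun S hS => mul_le_mul_of_nonneg_left ?_ ?_
  · exact sum_topDiff_sub_le hμ τ hσ hpres (card_pos.mp (by simp at hS; omega))
  · split_ifs
    exacts [hβ _, le_rfl]

lemma dProf_sub_le {β : Fin (n - 1) → ℝ} (hβ : ∀ k, 0 ≤ β k) {μ : Fin n → ℝ}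
    (hμ : ∀ i, 0 ≤ μ i) {c : Fin n} {σ : Equiv.Perm (Fin n)} (τ : Equiv.Perm (Fin n))
    (hσ : ∀ y, σ.symm c ≤ σ.symm y) {V V' : List (Equiv.Perm (Fin n))}
    (hVV' : List.Forall₂ (fun v v' => v' = v ∨ Uprank c v v') V V') :
    dProf n β μ σ V' - dProf n β μ σ V ≤ dProf n β μ τ V' - dProf n β μ τ V := by
  induction hVV' with
  | nil => simp [dProf]
  | cons hv _ ih =>
    simp only [dProf, List.map_cons, List.sum_cons] at ih ⊢
    linarith [dTD_sub_le hβ hμ τ hσ hv]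

end

theorem stmt13 (n : ℕ) (hn : 2 ≤ n) (β : Fin (n - 1) → ℝ) (hβ : ∀ k, 0 ≤ β k)
    (μ : Fin n → ℝ) (hμ : ∀ i, 0 ≤ μ i) (c : Fin n)
    (V V' : List (Equiv.Perm (Fin n)))
    (hVV' : List.Forall₂ (fun v v' => v' = v ∨ Uprank c v v') V V')
    (hc : c ∈ Wmed n (by omega) β μ V) :
    c ∈ Wmed n (by omega) β μ V' := by
  obtain ⟨σ, hσV, rfl⟩ := hc
  have hσ : ∀ y, σ.symm (σ ⟨0, by omega⟩) ≤ σ.symm y := fun y => by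
    rw [Equiv.symm_apply_apply]
    exact Fin.le_def.mpr (Nat.zero_le _)
  refine ⟨σ, fun τ => ?_, rfl⟩
  linarith [dProf_sub_le hβ hμ τ hσ hVV', hσV τ]
end
end

section
/- Let β ∈ ℝ₊^{n−1} with β_2 > 0 and let μ be the counting measure. Then P_β satisfies blockwise Pareto winners and blockwise Pareto losers: for every profile V = (v¹,…,vᵐ) and every k ∈ [n], (1) if vʲ([k]) = vʲ'([k]) for all j, j' ∈ [m], then every v ∈ P_β(V) satisfies v([k]) = v¹([k]); and (2) if vʲ([k]ᶜ) = vʲ'([k]ᶜ) for all j, j' ∈ [m] (where v([k]ᶜ) := {v_{k+1},…,v_n}), then every v ∈ P_β(V) satisfies v([k]ᶜ) = v¹([k]ᶜ). -/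
open Finset

noncomputable section

/-- `σ([k])`: the set of candidates in the first `k` positions of `σ`. -/
def firstK {n : ℕ} (σ : Equiv.Perm (Fin n)) (k : ℕ) : Finset (Fin n) :=
  Finset.univ.filter fun c => (σ.symm c : ℕ) < k

/-- `σ([k]ᶜ)`: the set of candidates in positions `k+1,…,n` of `σ`. -/
def lastCoK {n : ℕ} (σ : Equiv.Perm (Fin n)) (k : ℕ) : Finset (Fin n) :=
  Finset.univ.filter fun c => k ≤ (σ.symm c : ℕ)

/-!
If a median ranking `w` did not put the common block `A = v([k])` first, two adjacent
positions of `w` would hold a candidate outside `A` directly above one inside `A`, a pair that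
every voter ranks the other way. Swapping them changes the top of a menu only when the menu
contains both; there the new top is the one every voter prefers, so no top difference grows,
and on the pair menu itself a difference of weight `β₂ > 0` disappears. The swap thus brings
`w` strictly closer to every voter, contradicting minimality. Blockwise Pareto losers is the
same statement for the complementary block.
-/

open Equiv
open scoped symmDiff

lemma card_firstK {n : ℕ} (σ : Perm (Fin n)) (k : ℕ) : #(firstK σ k) = min n k := by
  rw [← Fin.card_filter_val_lt]
  exact card_equiv σ.symm fun c => by simp [firstK]

lemma lastCoK_eq_compl_firstK {n : ℕ} (σ : Perm (Fin n)) (k : ℕ) :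
    lastCoK σ k = (firstK σ k)ᶜ := by
  ext c
  simp [lastCoK, firstK]

lemma prefOver_of_mem_firstK_of_notMem {n k : ℕ} {σ : Perm (Fin n)} {x y : Fin n}
    (hx : x ∈ firstK σ k) (hy : y ∉ firstK σ k) : prefOver σ x y := by
  simp only [firstK, mem_filter, mem_univ, true_and, not_lt] at hx hy
  exact Fin.lt_def.2 (hx.trans_le hy)

lemma Fin.exists_not_and_succ_of_not_of_le {n : ℕ} {P : Fin n → Prop} {a b : Fin n}
    (hab : a ≤ b) (ha : ¬P a) (hb : P b) :
    ∃ i j : Fin n, (j : ℕ) = i + 1 ∧ ¬P i ∧ P j := by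
  obtain ⟨m, hm, hm'⟩ := Nat.exists_not_and_succ_of_not_zero_of_exists
    (p := fun m => ∃ h : a + m < n, P ⟨a + m, h⟩) (by simpa using ha)
    ⟨b - a, by simpa [Nat.add_sub_cancel' (Fin.le_def.1 hab)] using hb⟩
  obtain ⟨h, hP⟩ := hm'
  exact ⟨⟨a + m, by omega⟩, ⟨a + m + 1, h⟩, rfl, fun hP' => hm ⟨_, hP'⟩, hP⟩

lemma exists_adjacent_notMem_mem_of_firstK_ne {n k : ℕ} {w : Perm (Fin n)}
    {A : Finset (Fin n)} (hA : #A = #(firstK w k)) (hne : firstK w k ≠ A) :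
    ∃ p p' : Fin n, (p' : ℕ) = p + 1 ∧ w p ∉ A ∧ w p' ∈ A := by
  obtain ⟨x, hx, hxA⟩ := not_subset.1 fun h => hne (eq_of_subset_of_card_le h hA.le)
  obtain ⟨y, hyA, hy⟩ := not_subset.1 fun h => hne (eq_of_subset_of_card_le h hA.ge).symm
  have hxy : w.symm x ≤ w.symm y := (prefOver_of_mem_firstK_of_notMem hx hy).le
  exact Fin.exists_not_and_succ_of_not_of_le (P := fun i => w i ∈ A) hxy
    (by simpa) (by simpa)

lemma Finset.card_symmDiff_singleton {α : Type*} [DecidableEq α] (a b : α) :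
    #({a} ∆ {b} : Finset α) = if a = b then 0 else 2 := by
  split_ifs with hab
  · simp [hab]
  · rw [symmDiff_eq_union (disjoint_singleton.2 hab), ← insert_eq, card_pair hab]

lemma bestSet_eq_singleton {n : ℕ} (σ : Perm (Fin n)) {S : Finset (Fin n)} {b : Fin n}
    (hb : b ∈ S) (hmin : ∀ c ∈ S, σ.symm b ≤ σ.symm c) : bestSet σ S = {b} := by
  ext c
  simp only [bestSet, mem_filter, mem_singleton]
  constructor
  · rintro ⟨hcS, hc⟩
    exact σ.symm.injective (le_antisymm (hc b hb) (hmin c hcS))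
  · rintro rfl
    exact ⟨hb, hmin⟩

lemma exists_bestSet_eq_singleton {n : ℕ} (σ : Perm (Fin n)) {S : Finset (Fin n)}
    (hS : S.Nonempty) :
    ∃ b ∈ S, (∀ c ∈ S, σ.symm b ≤ σ.symm c) ∧ bestSet σ S = {b} := by
  obtain ⟨b, hb, hmin⟩ := S.exists_min_image σ.symm hS
  exact ⟨b, hb, hmin, bestSet_eq_singleton σ hb hmin⟩

lemma bestSet_pair {n : ℕ} {σ : Perm (Fin n)} {x y : Fin n} (h : prefOver σ x y) :
    bestSet σ {x, y} = {x} :=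
  bestSet_eq_singleton σ (mem_insert_self x {y}) <| by
    simpa [prefOver] using h.le

lemma mul_swap_symm_apply {n : ℕ} (w : Perm (Fin n)) (p p' c : Fin n) :
    (w * swap p p').symm c = swap p p' (w.symm c) := by
  simp [Perm.mul_def]

lemma eq_of_lt_of_swap_le_swap {n : ℕ} {p p' a b : Fin n} (hpp : (p' : ℕ) = p + 1)
    (hab : a < b) (h : swap p p' b ≤ swap p p' a) : a = p ∧ b = p' := by
  simp only [swap_apply_def] at h
  split_ifs at h <;> simp only [Fin.ext_iff, Fin.le_def, Fin.lt_def] at * <;> omega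

section AdjacentSwap

variable {n : ℕ} {w u : Perm (Fin n)} {p p' : Fin n}

lemma card_topDiff_mul_swap_le (hpp : (p' : ℕ) = p + 1) (hu : prefOver u (w p') (w p))
    {S : Finset (Fin n)} (hS : S.Nonempty) :
    #(topDiff (w * swap p p') u S) ≤ #(topDiff w u S) := by
  obtain ⟨b, hbS, hbmin, hb⟩ := exists_bestSet_eq_singleton w hS
  obtain ⟨b', hb'S, hb'min, hb'⟩ := exists_bestSet_eq_singleton (w * swap p p') hS
  obtain ⟨c, -, hcmin, hc⟩ := exists_bestSet_eq_singleton u hS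
  rw [topDiff, topDiff, hb, hb', hc, card_symmDiff_singleton, card_symmDiff_singleton]
  by_cases hbb : b' = b
  · rw [hbb]
  obtain ⟨hbp, hb'p'⟩ : w.symm b = p ∧ w.symm b' = p' := by
    refine eq_of_lt_of_swap_le_swap hpp ((hbmin b' hb'S).lt_of_ne ?_) ?_
    · exact fun h => hbb (w.symm.injective h).symm
    · simpa only [mul_swap_symm_apply] using hb'min b hbS
  -- the top of `S` moved from `w p` to `w p'`, and `u` prefers `w p'`
  have hbc : b ≠ c := by
    rintro rfl
    have := hcmin b' hb'S
    rw [← w.apply_symm_apply b, ← w.apply_symm_apply b', hbp, hb'p'] at this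
    exact this.not_gt hu
  rw [if_neg hbc]
  split_ifs <;> omega

lemma topDiff_mul_swap_pair (hpp : (p' : ℕ) = p + 1) (hu : prefOver u (w p') (w p)) :
    topDiff (w * swap p p') u {w p, w p'} = ∅ := by
  have hw' : prefOver (w * swap p p') (w p') (w p) := by
    simp [prefOver, mul_swap_symm_apply, Fin.lt_def, hpp]
  rw [topDiff, pair_comm, bestSet_pair hw', bestSet_pair hu, symmDiff_self, bot_eq_empty]

lemma card_topDiff_pair (hpp : (p' : ℕ) = p + 1) (hu : prefOver u (w p') (w p)) :
    #(topDiff w u {w p, w p'}) = 2 := by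
  have hw : prefOver w (w p) (w p') := by simp [prefOver, Fin.lt_def, hpp]
  have hne : w p ≠ w p' := fun h => hw.ne (congrArg w.symm h)
  rw [topDiff, bestSet_pair hw, pair_comm, bestSet_pair hu, card_symmDiff_singleton,
    if_neg hne]

lemma dTD_mul_swap_lt (hn : 2 ≤ n) {β : Fin (n - 1) → ℝ} (hβ : ∀ k, 0 ≤ β k)
    (hβ2 : 0 < β ⟨0, Nat.sub_pos_of_lt hn⟩) (hpp : (p' : ℕ) = p + 1)
    (hu : prefOver u (w p') (w p)) :
    dTD n β (fun _ => 1) (w * swap p p') u < dTD n β (fun _ => 1) w u := by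
  have hne : w p ≠ w p' := fun h => by simpa [hpp] using congrArg (Fin.val ∘ w.symm) h
  simp only [dTD, sum_const, nsmul_eq_mul, mul_one]
  refine sum_lt_sum (fun S hS => ?_) ⟨{w p, w p'}, by simp [card_pair hne], ?_⟩
  · have hS : S.Nonempty := card_pos.1 (zero_lt_two.trans_le (mem_filter.1 hS).2)
    refine mul_le_mul_of_nonneg_left (by exact_mod_cast card_topDiff_mul_swap_le hpp hu hS) ?_
    split
    exacts [hβ _, le_rfl]
  · rw [topDiff_mul_swap_pair hpp hu, card_topDiff_pair hpp hu, card_pair hne,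
      dif_pos (by omega)]
    simpa using hβ2

end AdjacentSwap

theorem firstK_eq_of_mem_Pmed {n : ℕ} (hn : 2 ≤ n) {β : Fin (n - 1) → ℝ}
    (hβ : ∀ k, 0 ≤ β k) (hβ2 : 0 < β ⟨0, Nat.sub_pos_of_lt hn⟩)
    {v : Perm (Fin n)} {V : List (Perm (Fin n))} {k : ℕ}
    (hV : ∀ u ∈ v :: V, firstK u k = firstK v k) {w : Perm (Fin n)}
    (hw : w ∈ Pmed n β (fun _ => 1) (v :: V)) : firstK w k = firstK v k := by
  by_contra hne
  obtain ⟨p, p', hpp, hp, hp'⟩ := exists_adjacent_notMem_mem_of_firstK_ne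
    (by rw [card_firstK, card_firstK]) hne
  have hvoters : ∀ u ∈ v :: V, prefOver u (w p') (w p) := fun u hu =>
    prefOver_of_mem_firstK_of_notMem (hV u hu ▸ hp') (hV u hu ▸ hp)
  exact (hw (w * swap p p')).not_gt <| List.sum_lt_sum_of_ne_nil (List.cons_ne_nil _ _) _ _
    fun u hu => dTD_mul_swap_lt hn hβ hβ2 hpp (hvoters u hu)

theorem stmt15 (n : ℕ) (hn : 2 ≤ n) (β : Fin (n - 1) → ℝ)
    (hβ : ∀ k, 0 ≤ β k) (hβ2 : 0 < β ⟨0, by omega⟩)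
    (v₁ : Equiv.Perm (Fin n)) (V : List (Equiv.Perm (Fin n)))
    (k : ℕ) :
    ((∀ u ∈ v₁ :: V, firstK u k = firstK v₁ k) →
      ∀ w ∈ Pmed n β (fun _ => (1 : ℝ)) (v₁ :: V), firstK w k = firstK v₁ k) ∧
    ((∀ u ∈ v₁ :: V, lastCoK u k = lastCoK v₁ k) →
      ∀ w ∈ Pmed n β (fun _ => (1 : ℝ)) (v₁ :: V), lastCoK w k = lastCoK v₁ k) := by
  refine ⟨fun hV w hw => firstK_eq_of_mem_Pmed hn hβ hβ2 hV hw, fun hV w hw => ?_⟩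
  simp only [lastCoK_eq_compl_firstK, compl_inj_iff] at hV ⊢
  exact firstK_eq_of_mem_Pmed hn hβ hβ2 hV hw
end
end

section
/- Let n ≥ 3, β ∈ ℝ₊^{n−1} with β_2 > 0, and μ ∈ (0,∞)ⁿ. The following are equivalent: (i) W^μ_β satisfies the Condorcet principle: for every profile V, every candidate c with n_{c,d}(V) ≥ 0 for all d ≠ c belongs to W^μ_β(V); (ii) P^μ_β satisfies the Condorcet principle: for every profile V and all i, j ∈ [n], if n_{i,j}(V) > 0 then there is no σ ∈ P^μ_β(V) with (j,i) ∈ adj(σ), and if n_{i,j}(V) = 0 then there exists σ ∈ P^μ_β(V) with (i,j) ∈ adj(σ) iff there exists π ∈ P^μ_β(V) with (j,i) ∈ adj(π); (iii) β_k = 0 for all k ≥ 3. -/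
open Finset

noncomputable section

/-- `n_{i,j}(V)`: number of voters preferring `i` to `j` minus those preferring `j` to `i`. -/
def nij {n : ℕ} (V : List (Equiv.Perm (Fin n))) (i j : Fin n) : ℤ :=
  ((V.countP fun v => decide (v.symm i < v.symm j)) : ℤ) -
    ((V.countP fun v => decide (v.symm j < v.symm i)) : ℤ)

/-- `(i,j) ∈ adj(σ)`: `i >_σ j` and they occupy consecutive positions of `σ`. -/
def adjPair {n : ℕ} (σ : Equiv.Perm (Fin n)) (i j : Fin n) : Prop :=
  σ.symm i < σ.symm j ∧ (σ.symm j : ℕ) = (σ.symm i : ℕ) + 1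

/-!
When only pairs carry weight (`β_k = 0` for `k ≥ 3`), swapping two adjacent candidates `i`, `j`
of `σ` changes the distance to a profile `V` by `β_2 (μ_i + μ_j) n_{i,j}(V)`. So a median may move a
weak Condorcet winner step by step to the top, never ranks `j` directly above a candidate `i` that
beats it, and may swap two tied adjacent candidates: (iii) implies (i) and (ii).

Conversely let `β_k > 0` for some `k ≥ 3` and let `a, b, c` be the first three candidates. For the
profile `(id, (a c), id, (a b))` the identity satisfies the triangle inequality with equality
against both transpositions, so the medians are the rankings `π` lying between `id` and each of
them; on every weighted menu the top of `π` is then the top of one of the two ends. The pairs make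
`π` agree with `id` except possibly on `{a, b}`, and the menu of the first `k` candidates puts `a`
above `b`, so `id` is the only median. Yet `b` ties `a` and beats everybody else, so (i) fails,
and `a`, `b` are tied but adjacent in the only median, so (ii) fails.
-/

open Equiv

namespace MedianRanking

section SymmDiff

variable {α : Type*} [DecidableEq α] {μ : α → ℝ}

lemma sum_symmDiff_singleton (μ : α → ℝ) (p q : α) :
    ∑ x ∈ symmDiff ({p} : Finset α) {q}, μ x = if p = q then 0 else μ p + μ q := by
  split_ifs with hpq
  · simp [hpq]
  · rw [symmDiff_eq_sup_sdiff_inf, sum_sdiff_eq_sub inf_le_sup]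
    simp [sum_pair hpq, hpq, Finset.singleton_inter_of_notMem]

lemma sum_symmDiff_le_add (hμ : ∀ x, 0 ≤ μ x) (A B C : Finset α) :
    ∑ x ∈ symmDiff A C, μ x ≤ ∑ x ∈ symmDiff A B, μ x + ∑ x ∈ symmDiff B C, μ x :=
  calc ∑ x ∈ symmDiff A C, μ x
      ≤ ∑ x ∈ symmDiff A B ∪ symmDiff B C, μ x :=
        sum_le_sum_of_subset_of_nonneg (symmDiff_triangle A B C) fun x _ _ => hμ x
    _ ≤ ∑ x ∈ symmDiff A B, μ x + ∑ x ∈ symmDiff B C, μ x := by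
        rw [← sum_union_inter]
        exact le_add_of_nonneg_right (sum_nonneg fun x _ => hμ x)

lemma eq_or_eq_of_sum_symmDiff_singleton_add_eq (hμ : ∀ x, 0 < μ x) {a b c : α}
    (h : ∑ x ∈ symmDiff {a} {b}, μ x + ∑ x ∈ symmDiff {b} {c}, μ x =
      ∑ x ∈ symmDiff {a} {c}, μ x) :
    b = a ∨ b = c := by
  simp only [sum_symmDiff_singleton] at h
  by_contra! hb
  split_ifs at h <;> simp_all <;> linarith [hμ a, hμ b, hμ c]

end SymmDiff


variable {n : ℕ}

section BestSet

variable {σ : Perm (Fin n)} {S : Finset (Fin n)} {x y : Fin n}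

lemma bestSet_eq_singleton (hx : x ∈ S) (h : ∀ y ∈ S, σ.symm x ≤ σ.symm y) :
    bestSet σ S = {x} := by
  ext z
  simp only [bestSet, mem_filter, mem_singleton]
  constructor
  · rintro ⟨hz, hzle⟩
    exact σ.symm.injective (le_antisymm (hzle x hx) (h z hz))
  · rintro rfl
    exact ⟨hx, h⟩

lemma exists_bestSet_eq_singleton (σ : Perm (Fin n)) (hS : S.Nonempty) :
    ∃ x, bestSet σ S = {x} := by
  obtain ⟨x, hx, hmin⟩ := exists_min_image S (fun z => σ.symm z) hS
  exact ⟨x, bestSet_eq_singleton hx hmin⟩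

lemma symm_le_of_bestSet_eq_singleton (h : bestSet σ S = {x}) (hy : y ∈ S) :
    σ.symm x ≤ σ.symm y := by
  have hx : x ∈ bestSet σ S := h ▸ mem_singleton_self x
  exact (mem_filter.mp hx).2 y hy

lemma bestSet_pair (σ : Perm (Fin n)) (x y : Fin n) :
    bestSet σ {x, y} = if σ.symm x < σ.symm y then {x} else {y} := by
  split_ifs with h
  · refine bestSet_eq_singleton (mem_insert_self x _) ?_
    simp [h.le]
  · refine bestSet_eq_singleton (by simp) ?_
    simpa using not_lt.mp h

end BestSet

section Distance

variable {β : Fin (n - 1) → ℝ} {μ : Fin n → ℝ}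

def menuWeight (β : Fin (n - 1) → ℝ) (S : Finset (Fin n)) : ℝ :=
  if h : S.card - 2 < n - 1 then β ⟨S.card - 2, h⟩ else 0

lemma dTD_eq_sum (β : Fin (n - 1) → ℝ) (μ : Fin n → ℝ) (σ π : Perm (Fin n)) :
    dTD n β μ σ π = ∑ S ∈ univ.filter (fun S : Finset (Fin n) => 2 ≤ S.card),
      menuWeight β S * ∑ x ∈ topDiff σ π S, μ x := rfl

lemma menuWeight_nonneg (hβ : ∀ k, 0 ≤ β k) (S : Finset (Fin n)) : 0 ≤ menuWeight β S := by
  unfold menuWeight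
  split_ifs
  exacts [hβ _, le_rfl]

lemma menuWeight_eq (k : Fin (n - 1)) {S : Finset (Fin n)} (hS : S.card = k.1 + 2) :
    menuWeight β S = β k := by
  rw [menuWeight, dif_pos (by omega)]
  exact congrArg β (Fin.ext (by simp [hS]))

lemma dTD_self (β : Fin (n - 1) → ℝ) (μ : Fin n → ℝ) (σ : Perm (Fin n)) :
    dTD n β μ σ σ = 0 := by
  simp [dTD, topDiff]

lemma dTD_comm (β : Fin (n - 1) → ℝ) (μ : Fin n → ℝ) (σ π : Perm (Fin n)) :
    dTD n β μ σ π = dTD n β μ π σ := by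
  simp only [dTD, topDiff, symmDiff_comm]

lemma dTD_triangle (hβ : ∀ k, 0 ≤ β k) (hμ : ∀ i, 0 ≤ μ i) (σ π ρ : Perm (Fin n)) :
    dTD n β μ σ ρ ≤ dTD n β μ σ π + dTD n β μ π ρ := by
  simp only [dTD_eq_sum, ← sum_add_distrib, ← mul_add]
  exact sum_le_sum fun S _ =>
    mul_le_mul_of_nonneg_left (sum_symmDiff_le_add hμ _ _ _) (menuWeight_nonneg hβ S)

lemma bestSet_eq_or_eq_of_dTD_add_eq (hβ : ∀ k, 0 ≤ β k) (hμ : ∀ i, 0 < μ i)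
    {σ π ρ : Perm (Fin n)} (h : dTD n β μ σ π + dTD n β μ π ρ = dTD n β μ σ ρ)
    {S : Finset (Fin n)} (hS : 2 ≤ S.card) (hw : 0 < menuWeight β S) :
    bestSet π S = bestSet σ S ∨ bestSet π S = bestSet ρ S := by
  simp only [dTD_eq_sum] at h
  set F := univ.filter (fun S : Finset (Fin n) => 2 ≤ S.card)
  set g : Finset (Fin n) → ℝ := fun T => menuWeight β T * (∑ x ∈ topDiff σ π T, μ x +
    ∑ x ∈ topDiff π ρ T, μ x - ∑ x ∈ topDiff σ ρ T, μ x)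
  have hg : ∀ T ∈ F, 0 ≤ g T := fun T _ => mul_nonneg (menuWeight_nonneg hβ T)
    (sub_nonneg.2 (sum_symmDiff_le_add (fun i => (hμ i).le) _ _ _))
  have hsum : ∑ T ∈ F, g T = 0 := by
    simp only [g, mul_sub, mul_add, sum_sub_distrib, sum_add_distrib]
    linarith
  have hgS : g S = 0 := (sum_eq_zero_iff_of_nonneg hg).1 hsum S (by simp [F, hS])
  have hne : S.Nonempty := card_pos.mp (by omega)
  obtain ⟨a, ha⟩ := exists_bestSet_eq_singleton σ hne
  obtain ⟨b, hb⟩ := exists_bestSet_eq_singleton π hne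
  obtain ⟨c, hc⟩ := exists_bestSet_eq_singleton ρ hne
  have hgap := (mul_eq_zero.1 hgS).resolve_left hw.ne'
  simp only [topDiff, ha, hb, hc] at hgap
  rcases eq_or_eq_of_sum_symmDiff_singleton_add_eq (b := b) hμ (by linarith) with rfl | rfl
  exacts [.inl (hb.trans ha.symm), .inr (hb.trans hc.symm)]

end Distance

section AdjacentSwap

variable {β : Fin (n - 1) → ℝ} {μ : Fin n → ℝ} {σ : Perm (Fin n)} {p q : Fin n}

lemma symm_mul_swap_apply (σ : Perm (Fin n)) (p q x : Fin n) :
    (σ * swap p q).symm x = swap p q (σ.symm x) := rfl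

lemma swap_lt_swap_iff_of_adjacent {u w : Fin n} (hq : q.1 = p.1 + 1)
    (h₁ : ¬(u = p ∧ w = q)) (h₂ : ¬(u = q ∧ w = p)) :
    swap p q u < swap p q w ↔ u < w := by
  rw [swap_apply_def, swap_apply_def]
  split_ifs <;> simp only [Fin.lt_def, Fin.ext_iff] at * <;> omega

lemma dTD_eq_mul_sum_pairs (hn : 2 ≤ n) (hβ0 : ∀ k : Fin (n - 1), 1 ≤ k.1 → β k = 0)
    (σ π : Perm (Fin n)) :
    dTD n β μ σ π = β ⟨0, by omega⟩ *
      ∑ S ∈ univ.filter (fun S : Finset (Fin n) => S.card = 2), ∑ x ∈ topDiff σ π S, μ x := by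
  have hzero : ∀ S ∈ univ.filter (fun S : Finset (Fin n) => 2 ≤ S.card),
      S ∉ univ.filter (fun S : Finset (Fin n) => S.card = 2) →
        menuWeight β S * ∑ x ∈ topDiff σ π S, μ x = 0 := by
    intro S hS hS2
    simp only [mem_filter, mem_univ, true_and] at hS hS2
    have hSn : S.card ≤ n := by simpa using card_le_univ S
    rw [menuWeight_eq ⟨S.card - 2, by omega⟩ (by simp only; omega), hβ0 _ (by simp only; omega),
      zero_mul]
  rw [dTD_eq_sum, ← sum_subset (fun S => by simp only [mem_filter, mem_univ, true_and]; omega)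
    hzero, mul_sum]
  exact sum_congr rfl fun S hS => by rw [menuWeight_eq ⟨0, by omega⟩ (by simpa using hS)]

lemma topDiff_mul_swap_pair (hq : q.1 = p.1 + 1) (v : Perm (Fin n)) {x y : Fin n}
    (hxy : ({x, y} : Finset (Fin n)) ≠ {σ p, σ q}) :
    topDiff (σ * swap p q) v {x, y} = topDiff σ v {x, y} := by
  have hord : (σ * swap p q).symm x < (σ * swap p q).symm y ↔ σ.symm x < σ.symm y := by
    rw [symm_mul_swap_apply, symm_mul_swap_apply]
    refine swap_lt_swap_iff_of_adjacent hq ?_ ?_ <;> rintro ⟨hx, hy⟩ <;> apply hxy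
    · rw [σ.symm_apply_eq.1 hx, σ.symm_apply_eq.1 hy]
    · rw [σ.symm_apply_eq.1 hx, σ.symm_apply_eq.1 hy, pair_comm]
  simp only [topDiff, bestSet_pair, hord]

lemma sum_topDiff_mul_swap_self (hq : q.1 = p.1 + 1) (v : Perm (Fin n)) :
    ∑ x ∈ topDiff (σ * swap p q) v {σ p, σ q}, μ x = ∑ x ∈ topDiff σ v {σ p, σ q}, μ x +
      (μ (σ p) + μ (σ q)) * if v.symm (σ p) < v.symm (σ q) then 1 else -1 := by
  have hpq : p < q := Fin.lt_def.2 (by omega)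
  have hne : σ p ≠ σ q := σ.injective.ne hpq.ne
  simp only [topDiff, bestSet_pair, symm_mul_swap_apply, symm_apply_apply, swap_apply_left,
    swap_apply_right, hpq, not_lt_of_gt hpq, if_true, if_false]
  split_ifs <;> simp [sum_symmDiff_singleton, hne, hne.symm]
  all_goals ring

lemma dTD_mul_swap (hn : 2 ≤ n) (hβ0 : ∀ k : Fin (n - 1), 1 ≤ k.1 → β k = 0)
    (hq : q.1 = p.1 + 1) (v : Perm (Fin n)) :
    dTD n β μ (σ * swap p q) v = dTD n β μ σ v + β ⟨0, by omega⟩ * (μ (σ p) + μ (σ q)) *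
      (if v.symm (σ p) < v.symm (σ q) then 1 else -1) := by
  have hne : σ p ≠ σ q := σ.injective.ne fun h => by simp [h] at hq
  have hmem : {σ p, σ q} ∈ univ.filter (fun S : Finset (Fin n) => S.card = 2) := by
    simp [card_pair hne]
  have hrest : ∀ S ∈ (univ.filter (fun S : Finset (Fin n) => S.card = 2)).erase {σ p, σ q},
      ∑ x ∈ topDiff (σ * swap p q) v S, μ x = ∑ x ∈ topDiff σ v S, μ x := by
    intro S hS
    obtain ⟨hSne, hS⟩ := mem_erase.1 hS
    obtain ⟨x, y, -, rfl⟩ := card_eq_two.1 (by simpa using hS)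
    rw [topDiff_mul_swap_pair hq v hSne]
  rw [dTD_eq_mul_sum_pairs hn hβ0, dTD_eq_mul_sum_pairs hn hβ0, ← add_sum_erase _ _ hmem,
    ← add_sum_erase _ _ hmem, sum_topDiff_mul_swap_self hq, sum_congr rfl hrest]
  ring

end AdjacentSwap

section Profile

variable {β : Fin (n - 1) → ℝ} {μ : Fin n → ℝ} {σ : Perm (Fin n)} {p q : Fin n}

@[simp]
lemma dProf_nil (β : Fin (n - 1) → ℝ) (μ : Fin n → ℝ) (σ : Perm (Fin n)) :
    dProf n β μ σ [] = 0 := rfl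

@[simp]
lemma dProf_cons (β : Fin (n - 1) → ℝ) (μ : Fin n → ℝ) (σ v : Perm (Fin n))
    (V : List (Perm (Fin n))) :
    dProf n β μ σ (v :: V) = dTD n β μ σ v + dProf n β μ σ V := by
  simp [dProf]

@[simp]
lemma nij_nil (i j : Fin n) : nij ([] : List (Perm (Fin n))) i j = 0 := by
  simp [nij]

lemma nij_cons {i j : Fin n} (hij : i ≠ j) (v : Perm (Fin n)) (V : List (Perm (Fin n))) :
    nij (v :: V) i j = (if v.symm i < v.symm j then 1 else -1) + nij V i j := by
  have hne : v.symm i ≠ v.symm j := v.symm.injective.ne hij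
  simp only [nij, List.countP_cons, decide_eq_true_eq]
  rcases hne.lt_or_gt with h | h <;> simp only [h, not_lt_of_gt h, if_true, if_false] <;>
    push_cast <;> ring

lemma nij_swap (V : List (Perm (Fin n))) (i j : Fin n) : nij V j i = -nij V i j := by
  simp only [nij]
  ring

lemma dProf_mul_swap (hn : 2 ≤ n) (hβ0 : ∀ k : Fin (n - 1), 1 ≤ k.1 → β k = 0)
    (hq : q.1 = p.1 + 1) (V : List (Perm (Fin n))) :
    dProf n β μ (σ * swap p q) V =
      dProf n β μ σ V + β ⟨0, by omega⟩ * (μ (σ p) + μ (σ q)) * nij V (σ p) (σ q) := by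
  have hne : σ p ≠ σ q := σ.injective.ne fun h => by simp [h] at hq
  induction V with
  | nil => simp
  | cons v V ih =>
    rw [dProf_cons, dProf_cons, dTD_mul_swap hn hβ0 hq, ih, nij_cons hne]
    push_cast
    ring

lemma exists_mem_Pmed (β : Fin (n - 1) → ℝ) (μ : Fin n → ℝ) (V : List (Perm (Fin n))) :
    ∃ σ, σ ∈ Pmed n β μ V := by
  obtain ⟨σ, -, hmin⟩ := exists_min_image univ (fun σ => dProf n β μ σ V) univ_nonempty
  exact ⟨σ, fun τ => hmin τ (mem_univ τ)⟩

lemma mul_swap_mem_Pmed (hn : 2 ≤ n) (hβ0 : ∀ k : Fin (n - 1), 1 ≤ k.1 → β k = 0)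
    (hβ : ∀ k, 0 ≤ β k) (hμ : ∀ i, 0 ≤ μ i) {V : List (Perm (Fin n))}
    (hσ : σ ∈ Pmed n β μ V) (hq : q.1 = p.1 + 1) (h : nij V (σ p) (σ q) ≤ 0) :
    σ * swap p q ∈ Pmed n β μ V := by
  have hle : dProf n β μ (σ * swap p q) V ≤ dProf n β μ σ V := by
    rw [dProf_mul_swap hn hβ0 hq]
    have : (nij V (σ p) (σ q) : ℝ) ≤ 0 := by exact_mod_cast h
    have := mul_nonneg (hβ ⟨0, by omega⟩) (add_nonneg (hμ (σ p)) (hμ (σ q)))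
    nlinarith
  exact fun τ => hle.trans (hσ τ)

lemma dProf_mul_swap_lt (hn : 2 ≤ n) (hβ0 : ∀ k : Fin (n - 1), 1 ≤ k.1 → β k = 0)
    (hβ₀ : 0 < β ⟨0, by omega⟩) (hμ : ∀ i, 0 < μ i) (hq : q.1 = p.1 + 1)
    {V : List (Perm (Fin n))} (h : nij V (σ p) (σ q) < 0) :
    dProf n β μ (σ * swap p q) V < dProf n β μ σ V := by
  rw [dProf_mul_swap hn hβ0 hq]
  have : (nij V (σ p) (σ q) : ℝ) < 0 := by exact_mod_cast h
  have := mul_pos hβ₀ (add_pos (hμ (σ p)) (hμ (σ q)))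
  nlinarith

end Profile

section PairwiseWeights

variable {β : Fin (n - 1) → ℝ} {μ : Fin n → ℝ} {V : List (Perm (Fin n))}

lemma adjPair_mul_swap {σ : Perm (Fin n)} {i j : Fin n} (h : adjPair σ i j) :
    adjPair (σ * swap (σ.symm i) (σ.symm j)) j i := by
  simpa only [adjPair, symm_mul_swap_apply, swap_apply_left, swap_apply_right] using h

theorem exists_mem_Pmed_symm_eq_zero (hn : 2 ≤ n)
    (hβ0 : ∀ k : Fin (n - 1), 1 ≤ k.1 → β k = 0) (hβ : ∀ k, 0 ≤ β k) (hμ : ∀ i, 0 ≤ μ i)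
    {c : Fin n} (hc : ∀ e, e ≠ c → 0 ≤ nij V c e) {σ : Perm (Fin n)}
    (hσ : σ ∈ Pmed n β μ V) :
    ∃ τ ∈ Pmed n β μ V, (τ.symm c).1 = 0 := by
  obtain ⟨m, hm⟩ : ∃ m, (σ.symm c).1 = m := ⟨_, rfl⟩
  induction m generalizing σ with
  | zero => exact ⟨σ, hσ, hm⟩
  | succ m ih =>
    set p : Fin n := ⟨m, by omega⟩
    have hq : (σ.symm c).1 = p.1 + 1 := hm
    have hp : σ p ≠ c := fun h => by simp [← h, p] at hm
    refine ih (mul_swap_mem_Pmed hn hβ0 hβ hμ hσ hq ?_) ?_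
    · simpa [nij_swap V c] using hc _ hp
    · simp [symm_mul_swap_apply, p]

theorem mem_Wmed_of_condorcet (hn : 2 ≤ n) (hβ0 : ∀ k : Fin (n - 1), 1 ≤ k.1 → β k = 0)
    (hβ : ∀ k, 0 ≤ β k) (hμ : ∀ i, 0 ≤ μ i) {c : Fin n}
    (hc : ∀ e, e ≠ c → 0 ≤ nij V c e) :
    c ∈ Wmed n (by omega) β μ V := by
  obtain ⟨σ, hσ⟩ := exists_mem_Pmed β μ V
  obtain ⟨τ, hτ, hτc⟩ := exists_mem_Pmed_symm_eq_zero hn hβ0 hβ hμ hc hσ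
  exact ⟨τ, hτ, (τ.eq_symm_apply.1 (Fin.ext hτc.symm))⟩

theorem not_adjPair_of_nij_pos (hn : 2 ≤ n) (hβ0 : ∀ k : Fin (n - 1), 1 ≤ k.1 → β k = 0)
    (hβ₀ : 0 < β ⟨0, by omega⟩) (hμ : ∀ i, 0 < μ i) {i j : Fin n} (h : 0 < nij V i j) :
    ¬ ∃ σ ∈ Pmed n β μ V, adjPair σ j i := by
  rintro ⟨σ, hσ, hadj⟩
  refine (hσ _).not_gt (dProf_mul_swap_lt hn hβ0 hβ₀ hμ hadj.2 ?_)
  simpa [nij_swap V i j] using h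

theorem exists_adjPair_of_nij_eq_zero (hn : 2 ≤ n)
    (hβ0 : ∀ k : Fin (n - 1), 1 ≤ k.1 → β k = 0) (hβ : ∀ k, 0 ≤ β k) (hμ : ∀ i, 0 ≤ μ i)
    {i j : Fin n} (h : nij V i j = 0) (hij : ∃ σ ∈ Pmed n β μ V, adjPair σ i j) :
    ∃ π ∈ Pmed n β μ V, adjPair π j i := by
  obtain ⟨σ, hσ, hadj⟩ := hij
  exact ⟨_, mul_swap_mem_Pmed hn hβ0 hβ hμ hσ hadj.2 (by simp [h]), adjPair_mul_swap hadj⟩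

end PairwiseWeights

section Witness

variable {β : Fin (n - 1) → ℝ} {μ : Fin n → ℝ}

lemma dProf_pair_pair (σ u w π : Perm (Fin n)) :
    dProf n β μ π [σ, u, σ, w] = dProf n β μ σ [σ, u, σ, w] +
      (dTD n β μ σ π + dTD n β μ π u - dTD n β μ σ u) +
      (dTD n β μ σ π + dTD n β μ π w - dTD n β μ σ w) := by
  simp only [dProf_cons, dProf_nil, dTD_self, dTD_comm β μ π σ]
  ring

lemma mem_Pmed_pair_pair (hβ : ∀ k, 0 ≤ β k) (hμ : ∀ i, 0 ≤ μ i) (σ u w : Perm (Fin n)) :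
    σ ∈ Pmed n β μ [σ, u, σ, w] := fun π => by
  rw [dProf_pair_pair σ u w π]
  linarith [dTD_triangle hβ hμ σ π u, dTD_triangle hβ hμ σ π w]

lemma dTD_add_eq_of_mem_Pmed_pair_pair (hβ : ∀ k, 0 ≤ β k) (hμ : ∀ i, 0 ≤ μ i)
    {σ u w π : Perm (Fin n)} (hπ : π ∈ Pmed n β μ [σ, u, σ, w]) :
    dTD n β μ σ π + dTD n β μ π u = dTD n β μ σ u ∧
      dTD n β μ σ π + dTD n β μ π w = dTD n β μ σ w := by
  have := hπ σ
  rw [dProf_pair_pair σ u w π] at this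
  have := dTD_triangle hβ hμ σ π u
  have := dTD_triangle hβ hμ σ π w
  constructor <;> linarith

lemma symm_lt_symm_of_dTD_add_eq (hn : 2 ≤ n) (hβ : ∀ k, 0 ≤ β k)
    (hβ₀ : 0 < β ⟨0, by omega⟩) (hμ : ∀ i, 0 < μ i) {σ π ρ : Perm (Fin n)}
    (h : dTD n β μ σ π + dTD n β μ π ρ = dTD n β μ σ ρ) {x y : Fin n}
    (hσ : σ.symm x < σ.symm y) (hρ : ρ.symm x < ρ.symm y) :
    π.symm x < π.symm y := by
  have hxy : x ≠ y := fun h => by simp [h] at hσ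
  have hw : 0 < menuWeight β {x, y} := by
    rwa [menuWeight_eq ⟨0, by omega⟩ (card_pair hxy)]
  have htop := bestSet_eq_or_eq_of_dTD_add_eq hβ hμ h (card_pair hxy).ge hw
  simp only [bestSet_pair, hσ, hρ, if_true, or_self] at htop
  by_contra hπ
  simp [hπ, hxy.symm] at htop

def witnessProfile (a b c : Fin n) : List (Perm (Fin n)) := [1, swap a c, 1, swap a b]

lemma eq_one_of_mem_Pmed_witnessProfile (hn : 2 ≤ n) (hβ : ∀ k, 0 ≤ β k)
    (hβ₀ : 0 < β ⟨0, by omega⟩) (hμ : ∀ i, 0 < μ i) {k : Fin (n - 1)} (hk1 : 1 ≤ k.1)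
    (hk : 0 < β k) {a b c : Fin n} (ha : a.1 = 0) (hb : b.1 = 1) (hc : c.1 = 2)
    {π : Perm (Fin n)} (hπ : π ∈ Pmed n β μ (witnessProfile a b c)) :
    π = 1 := by
  obtain ⟨h₂, h₄⟩ := dTD_add_eq_of_mem_Pmed_pair_pair hβ (fun i => (hμ i).le) hπ
  have hlt : ∀ x y, x < y → ¬(x = a ∧ y = b) → π.symm x < π.symm y := fun x y hxy hab =>
    symm_lt_symm_of_dTD_add_eq hn hβ hβ₀ hμ h₄ hxy <| by
      rw [symm_swap, swap_lt_swap_iff_of_adjacent (by omega) hab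
        (fun h => by simp only [Fin.lt_def, h.1, h.2] at hxy; omega)]
      exact hxy
  set S := Iic (⟨k.1 + 1, by omega⟩ : Fin n)
  have hS : S.card = k.1 + 2 := by simp [S]
  have hmem : ∀ x : Fin n, x.1 ≤ k.1 + 1 → x ∈ S := fun x hx => by simpa [S, Fin.le_def]
  have haS := hmem a (by omega)
  have hbS := hmem b (by omega)
  have hcS := hmem c (by omega)
  have hwS : 0 < menuWeight β S := by rwa [menuWeight_eq k hS]
  have hac : π.symm a < π.symm c :=
    hlt a c (by simp [Fin.lt_def, ha, hc]) fun h => by have := congrArg Fin.val h.2; omega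
  -- The top of `π` on `S` is that of `1` or that of `swap a c`; it is not `c`, since `π`
  -- ranks `a` above `c`.
  have htop : bestSet π S = {a} := by
    have h₁ : bestSet 1 S = {a} :=
      bestSet_eq_singleton haS fun y _ => show a ≤ y from Fin.le_def.2 (by omega)
    have h₃ : bestSet (swap a c) S = {c} :=
      bestSet_eq_singleton hcS fun y _ => by simp [Fin.le_def, ha]
    rcases bestSet_eq_or_eq_of_dTD_add_eq hβ hμ h₂ (by omega) hwS with h | h
    · rwa [h₁] at h
    · rw [h₃] at h
      exact absurd (symm_le_of_bestSet_eq_singleton h haS) (not_le.2 hac)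
  have hmono : StrictMono π.symm := fun x y hxy => by
    by_cases hab : x = a ∧ y = b
    · obtain ⟨rfl, rfl⟩ := hab
      exact (symm_le_of_bestSet_eq_singleton htop hbS).lt_of_ne (π.symm.injective.ne hxy.ne)
    · exact hlt x y hxy hab
  ext x
  simpa using congrArg Fin.val (hmono.apply_eq (x := π x)).symm

lemma mem_Pmed_witnessProfile_iff (hn : 2 ≤ n) (hβ : ∀ k, 0 ≤ β k)
    (hβ₀ : 0 < β ⟨0, by omega⟩) (hμ : ∀ i, 0 < μ i) {k : Fin (n - 1)} (hk1 : 1 ≤ k.1)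
    (hk : 0 < β k) {a b c : Fin n} (ha : a.1 = 0) (hb : b.1 = 1) (hc : c.1 = 2)
    (π : Perm (Fin n)) :
    π ∈ Pmed n β μ (witnessProfile a b c) ↔ π = 1 :=
  ⟨eq_one_of_mem_Pmed_witnessProfile hn hβ hβ₀ hμ hk1 hk ha hb hc,
    fun h => h ▸ mem_Pmed_pair_pair hβ (fun i => (hμ i).le) 1 _ _⟩

lemma nij_witnessProfile_left {a b c : Fin n} (ha : a.1 = 0) (hb : b.1 = 1) (hc : c.1 = 2) :
    nij (witnessProfile a b c) a b = 0 := by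
  have hab : a ≠ b := fun h => by simp [h, hb] at ha
  simp [pull_end, witnessProfile, nij_cons hab, swap_apply_def, ← Fin.val_fin_lt, Fin.ext_iff,
    ha, hb, hc]

lemma nij_witnessProfile_nonneg {a b c : Fin n} (ha : a.1 = 0) (hb : b.1 = 1) (hc : c.1 = 2)
    {e : Fin n} (he : e ≠ b) :
    0 ≤ nij (witnessProfile a b c) b e := by
  simp [pull_end, witnessProfile, nij_cons he.symm, swap_apply_def, ← Fin.val_fin_lt,
    Fin.ext_iff, ha, hb, hc]
  split_ifs <;> omega

end Witness

end MedianRanking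

open MedianRanking in
theorem stmt17 (n : ℕ) (hn : 3 ≤ n) (β : Fin (n - 1) → ℝ)
    (hβ : ∀ k, 0 ≤ β k) (hβ2 : 0 < β ⟨0, by omega⟩)
    (μ : Fin n → ℝ) (hμ : ∀ i, 0 < μ i) :
    ((∀ (V : List (Equiv.Perm (Fin n))) (c : Fin n),
        (∀ e : Fin n, e ≠ c → 0 ≤ nij V c e) → c ∈ Wmed n (by omega) β μ V) ↔
      (∀ k : Fin (n - 1), 1 ≤ k.1 → β k = 0)) ∧
    ((∀ (V : List (Equiv.Perm (Fin n))) (i j : Fin n),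
        (0 < nij V i j → ¬ ∃ σ ∈ Pmed n β μ V, adjPair σ j i) ∧
        (nij V i j = 0 →
          ((∃ σ ∈ Pmed n β μ V, adjPair σ i j) ↔ ∃ π ∈ Pmed n β μ V, adjPair π j i))) ↔
      (∀ k : Fin (n - 1), 1 ≤ k.1 → β k = 0)) := by
  have hμ' : ∀ i, 0 ≤ μ i := fun i => (hμ i).le
  set a : Fin n := ⟨0, by omega⟩
  set b : Fin n := ⟨1, by omega⟩
  set W := witnessProfile a b ⟨2, by omega⟩
  have hW : ¬ (∀ k : Fin (n - 1), 1 ≤ k.1 → β k = 0) → ∀ π, π ∈ Pmed n β μ W ↔ π = 1 := by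
    intro h
    push Not at h
    obtain ⟨k, hk1, hk⟩ := h
    exact mem_Pmed_witnessProfile_iff (by omega) hβ hβ2 hμ hk1 ((hβ k).lt_of_ne' hk) rfl rfl rfl
  refine ⟨⟨fun hWmed => ?_, fun hβ0 V c hc => mem_Wmed_of_condorcet (by omega) hβ0 hβ hμ' hc⟩,
    ⟨fun hPmed => ?_, fun hβ0 V i j => ⟨not_adjPair_of_nij_pos (by omega) hβ0 hβ2 hμ,
      fun h => ⟨exists_adjPair_of_nij_eq_zero (by omega) hβ0 hβ hμ' h,
        exists_adjPair_of_nij_eq_zero (by omega) hβ0 hβ hμ' (by rw [nij_swap, h, neg_zero])⟩⟩⟩⟩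
  · by_contra h
    obtain ⟨σ, hσ, hσb⟩ := hWmed W b fun e he => nij_witnessProfile_nonneg rfl rfl rfl he
    rw [hW h] at hσ
    subst hσ
    simp [b, Fin.ext_iff] at hσb
  · by_contra h
    obtain ⟨π, hπ, hadj⟩ := ((hPmed W a b).2 (nij_witnessProfile_left rfl rfl rfl)).1
      ⟨1, (hW h 1).2 rfl, by simp [pull_end, adjPair, a, b]⟩
    rw [hW h] at hπ
    subst hπ
    simp [pull_end, adjPair, a, b] at hadj
end
end
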